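/- arXiv:2603.26289 — 9 statements merged into one kernel-verified Lean document; each statement's English description precedes it below -/
import Mathlib

section
/- Let A be an integral domain over a field k and φ: A → A[U] an exponential map. Then the ring of invariants A^φ = {a ∈ A : φ(a) = a} is inert (factorially closed) in A: that is, if a, b ∈ A are nonzero and ab ∈ A^φ, then a ∈ A^φ and b ∈ A^φ. -/
/-- An exponential map (equivalently, a `𝔾ₐ`-action) on a `k`-algebra `A`:
a `k`-algebra homomorphism `φ : A → A[U]` such that evaluation at `U = 0`
is the identity and the coaction axiom `φ_V ∘ φ_U = φ_{U+V}` holds. -/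
structure ExpMap (k A : Type*) [Field k] [CommRing A] [Algebra k A] where
  toFun : A →ₐ[k] Polynomial A
  eval_zero : ∀ a : A, (toFun a).eval 0 = a
  coaction : ∀ a : A,
    (toFun a).map (toFun.toRingHom) =
      (toFun a).eval₂ (Polynomial.C.comp Polynomial.C)
        (Polynomial.X + Polynomial.C Polynomial.X)

variable {k A : Type*} [Field k] [CommRing A] [Algebra k A]

/-- The ring of invariants `A^φ = {a ∈ A : φ(a) = a}` of an exponential map. -/
def ExpMap.invariants (φ : ExpMap k A) : Subalgebra k A where
  carrier := {a : A | φ.toFun a = Polynomial.C a}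
  mul_mem' := by
    intro a b ha hb
    simp only [Set.mem_setOf_eq, map_mul] at *
    rw [ha, hb]
  add_mem' := by
    intro a b ha hb
    simp only [Set.mem_setOf_eq, map_add] at *
    rw [ha, hb]
  algebraMap_mem' := by
    intro r
    simp only [Set.mem_setOf_eq, AlgHom.commutes, Polynomial.algebraMap_apply]

/-- An exponential map is nontrivial if its ring of invariants is a proper subring. -/
def ExpMap.Nontrivial (φ : ExpMap k A) : Prop := ∃ a : A, φ.toFun a ≠ Polynomial.C a

/-- The ring of invariants `A^φ` of an exponential map on an integral
domain is inert (factorially closed) in `A`. -/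
theorem invariants_inert [IsDomain A] (φ : ExpMap k A) (a b : A) (ha : a ≠ 0) (hb : b ≠ 0)
    (hab : a * b ∈ φ.invariants) : a ∈ φ.invariants ∧ b ∈ φ.invariants := by
  have key : ∀ x : A, x ≠ 0 → (φ.toFun x).natDegree = 0 → x ∈ φ.invariants := by
    intro x hx hdeg
    have h0 : (φ.toFun x).coeff 0 = x := by
      rw [Polynomial.coeff_zero_eq_eval_zero]
      exact φ.eval_zero x
    show φ.toFun x = Polynomial.C x
    rw [Polynomial.eq_C_of_natDegree_eq_zero hdeg, h0]
  have hmul : φ.toFun a * φ.toFun b = Polynomial.C (a * b) := by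
    rw [← map_mul]; exact hab
  have hA : φ.toFun a ≠ 0 := by
    intro h
    have := φ.eval_zero a
    rw [h] at this
    simp at this
    exact ha this.symm
  have hB : φ.toFun b ≠ 0 := by
    intro h
    have := φ.eval_zero b
    rw [h] at this
    simp at this
    exact hb this.symm
  have hdeg : (φ.toFun a).natDegree + (φ.toFun b).natDegree = 0 := by
    rw [← Polynomial.natDegree_mul hA hB, hmul, Polynomial.natDegree_C]
  exact ⟨key a ha (Nat.eq_zero_of_add_eq_zero_right hdeg),
         key b hb (Nat.eq_zero_of_add_eq_zero_left hdeg)⟩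
end

section
/- Let A be an integral domain over a field k and φ an exponential map on A. If A is a unique factorization domain, then the ring of invariants A^φ is also a unique factorization domain. -/
variable {k A : Type*} [Field k] [CommRing A] [Algebra k A]

section Aux

variable [IsDomain A] (φ : ExpMap k A)

lemma ExpMap.mem_invariants {a : A} : a ∈ φ.invariants ↔ φ.toFun a = Polynomial.C a :=
  Iff.rfl

lemma ExpMap.toFun_ne_zero {a : A} (ha : a ≠ 0) : φ.toFun a ≠ 0 := fun h => by
  have := φ.eval_zero a
  rw [h] at this
  simp at this
  exact ha this.symm

/-- The invariant ring is factorially closed: if a product of two nonzero elements is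
invariant, then each factor is invariant. -/
lemma ExpMap.fc {a b : A} (ha : a ≠ 0) (hb : b ≠ 0) (hab : a * b ∈ φ.invariants) :
    a ∈ φ.invariants := by
  rw [ExpMap.mem_invariants, map_mul] at hab
  have hdeg : (φ.toFun a).natDegree + (φ.toFun b).natDegree = 0 := by
    rw [← Polynomial.natDegree_mul (φ.toFun_ne_zero ha) (φ.toFun_ne_zero hb), hab,
      Polynomial.natDegree_C]
  obtain ⟨c, hc⟩ := Polynomial.natDegree_eq_zero.mp (Nat.eq_zero_of_add_eq_zero_right hdeg)
  have hca : c = a := by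
    have := φ.eval_zero a
    rw [← hc] at this
    simpa using this
  rw [ExpMap.mem_invariants, ← hc, hca]

lemma ExpMap.fc' {a b : A} (ha : a ≠ 0) (hb : b ≠ 0) (hab : a * b ∈ φ.invariants) :
    b ∈ φ.invariants := φ.fc hb ha (by rwa [mul_comm])

/-- Divisibility in the big ring reflects to the invariant ring. -/
lemma ExpMap.dvd_reflect {x y : φ.invariants} (h : (x : A) ∣ (y : A)) : x ∣ y := by
  obtain ⟨c, hc⟩ := h
  by_cases hx : (x : A) = 0
  · have hy : (y : A) = 0 := by rw [hc, hx, zero_mul]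
    exact ⟨0, by ext; simp [hy, hx]⟩
  by_cases hcz : c = 0
  · exact ⟨0, by ext; simp [hc, hcz]⟩
  · have hcB : c ∈ φ.invariants := φ.fc' hx hcz (hc ▸ y.2)
    exact ⟨⟨c, hcB⟩, by ext; exact hc⟩

/-- Units reflect to the invariant ring. -/
lemma ExpMap.isUnit_reflect {x : φ.invariants} (h : IsUnit (x : A)) : IsUnit x := by
  obtain ⟨c, hc, hc2⟩ := isUnit_iff_exists.mp h
  have hx : (x : A) ≠ 0 := fun h0 => by rw [h0, zero_mul] at hc; exact one_ne_zero hc.symm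
  have hcz : c ≠ 0 := fun h0 => by rw [h0, mul_zero] at hc; exact one_ne_zero hc.symm
  have hcB : c ∈ φ.invariants := φ.fc' hx hcz (hc ▸ φ.invariants.one_mem)
  exact isUnit_iff_exists.mpr ⟨⟨c, hcB⟩, by ext; exact hc, by ext; exact hc2⟩

lemma ExpMap.irreducible_lift {p : φ.invariants} (hp : Irreducible p) :
    Irreducible (p : A) := by
  constructor
  · exact fun h => hp.not_isUnit (φ.isUnit_reflect h)
  · intro a b hab
    have hpz : (p : A) ≠ 0 := fun h => hp.ne_zero (by ext; simpa using h)
    have haz : a ≠ 0 := fun h => hpz (by simp [hab, h])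
    have hbz : b ≠ 0 := fun h => hpz (by simp [hab, h])
    have haB : a ∈ φ.invariants := φ.fc haz hbz (hab ▸ p.2)
    have hbB : b ∈ φ.invariants := φ.fc' haz hbz (hab ▸ p.2)
    rcases hp.isUnit_or_isUnit (a := ⟨a, haB⟩) (b := ⟨b, hbB⟩) (by ext; exact hab) with h | h
    · exact Or.inl (h.map φ.invariants.val)
    · exact Or.inr (h.map φ.invariants.val)

end Aux

/-- If `A` is a UFD then the ring of invariants `A^φ` of any exponential
map on `A` is also a UFD. -/
theorem invariants_ufd [IsDomain A] [UniqueFactorizationMonoid A] (φ : ExpMap k A) :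
    UniqueFactorizationMonoid φ.invariants := by
  have wf : WellFounded (DvdNotUnit (α := φ.invariants)) := by
    refine Subrelation.wf (r := InvImage DvdNotUnit (Subtype.val)) ?_
      (InvImage.wf _ wellFounded_dvdNotUnit)
    rintro x y ⟨hx, c, hc, rfl⟩
    exact ⟨fun h => hx (by ext; simpa using h), c, fun h => hc (φ.isUnit_reflect h), rfl⟩
  haveI : WfDvdMonoid φ.invariants := ⟨wf⟩
  refine { irreducible_iff_prime := fun {p} => ⟨fun hp => ?_, Prime.irreducible⟩ }
  have hpA : Prime (p : A) := (φ.irreducible_lift hp).prime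
  refine ⟨fun h => hpA.ne_zero (by simpa using congrArg Subtype.val h), 
    fun h => hpA.not_isUnit (h.map φ.invariants.val), fun a b hab => ?_⟩
  have : (p : A) ∣ (a : A) * (b : A) := by
    obtain ⟨c, hc⟩ := hab
    exact ⟨c, congrArg Subtype.val hc⟩
  rcases hpA.dvd_or_dvd this with h | h
  · exact Or.inl (φ.dvd_reflect h)
  · exact Or.inr (φ.dvd_reflect h)
end

section
/- Let A be an integral domain over a field k and φ: A → A[U] an exponential map. Then the ring of invariants A^φ is algebraically closed in A: any element of A that is algebraic over A^φ lies in A^φ. -/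
variable {k A : Type*} [Field k] [CommRing A] [Algebra k A]

/-- The ring of invariants `A^φ` is algebraically closed in `A`: any
element of `A` algebraic over `A^φ` lies in `A^φ`. -/
theorem invariants_algClosed [IsDomain A] (φ : ExpMap k A) (a : A)
    (ha : IsAlgebraic φ.invariants a) : a ∈ φ.invariants := by
  obtain ⟨p, hp0, hpa⟩ := ha
  set q : Polynomial A := p.map (algebraMap φ.invariants A) with hq
  have hq0 : q ≠ 0 := by
    rw [hq, Ne, Polynomial.map_eq_zero_iff Subtype.val_injective]
    exact hp0
  have hqa : q.eval a = 0 := by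
    rw [hq, Polynomial.eval_map]
    exact hpa
  by_contra hne
  have hne' : φ.toFun a ≠ Polynomial.C a := hne
  set P := φ.toFun a with hP
  have hd : P.natDegree ≠ 0 := by
    intro h
    obtain ⟨c, hc⟩ := Polynomial.natDegree_eq_zero.mp h
    apply hne'
    have h0 := φ.eval_zero a
    rw [← hP, ← hc, Polynomial.eval_C] at h0
    rw [← hc, h0]
  have hn : q.natDegree ≠ 0 := by
    intro h
    obtain ⟨c, hc⟩ := Polynomial.natDegree_eq_zero.mp h
    rw [← hc] at hqa hq0
    rw [Polynomial.eval_C] at hqa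
    rw [hqa] at hq0
    simp at hq0
  have key : q.comp P = 0 := by
    have h1 : φ.toFun (q.eval a) = q.eval₂ φ.toFun.toRingHom P := by
      have := Polynomial.hom_eval₂ q (RingHom.id A) φ.toFun.toRingHom a
      simpa using this
    have h2 : q.eval₂ φ.toFun.toRingHom P = q.eval₂ Polynomial.C P := by
      rw [Polynomial.eval₂_eq_sum_range, Polynomial.eval₂_eq_sum_range]
      refine Finset.sum_congr rfl fun i _ => ?_
      congr 1
      have hmem : q.coeff i ∈ φ.invariants := by
        rw [hq, Polynomial.coeff_map]
        exact (p.coeff i).2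
      exact hmem
    rw [hqa, map_zero] at h1
    rw [Polynomial.comp, ← h2, ← h1]
  have hlc := Polynomial.leadingCoeff_comp (p := q) hd
  rw [key, Polynomial.leadingCoeff_zero] at hlc
  have : q.leadingCoeff * P.leadingCoeff ^ q.natDegree ≠ 0 := by
    apply mul_ne_zero
    · exact Polynomial.leadingCoeff_ne_zero.mpr hq0
    · exact pow_ne_zero _ (Polynomial.leadingCoeff_ne_zero.mpr
        (fun h => hd (by rw [h]; simp)))
  exact this hlc.symm
end

section
/- Let k be a field of characteristic p ≥ 2 and a ∈ k \ k^p. Then the k-algebra B = k[X,Y]/(Y^p − X − aX^p) is not a unique factorization domain, but B ⊗_k k(a^{1/p}) is isomorphic to a polynomial ring in one variable over k(a^{1/p}). -/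
/-!
Over `L` with `b ^ p = a`, the curve `y ^ p = x + a x ^ p` is parametrized by
`t ↦ (t ^ p, t + b t ^ p)`, with inverse `t = y - b x`; this gives `L ⊗ B ≃ L[t]` and an
embedding `B ↪ L[t]`. If `B` were a UFD, a prime factor `q` of `x` would divide `y` (as
`x ∣ y ^ p`), so its image would divide `gcd (t ^ p, t + b t ^ p) = t`. Modulo `t ^ p` the image
of `B` is `k[t]`, so the image of `q` is `γ₀ + γ₁ t` with `γᵢ ∈ k`. Then
`1 ⊗ (q - γ₀ - γ₁ y) = b ⊗ (-γ₁ x)` in `L ⊗ B`, which forces `γ₁ = 0` because `1` and `b` are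
linearly independent over `k`. Hence `q = γ₀` is a unit, contradicting primality.
-/

open Polynomial TensorProduct

theorem TensorProduct.eq_zero_of_tmul_eq_tmul_of_notMem_span {K V M : Type*} [Field K]
    [AddCommGroup V] [Module K V] [AddCommGroup M] [Module K M] {u v : V} {x y : M}
    (hv : v ∉ K ∙ u) (h : u ⊗ₜ[K] y = v ⊗ₜ[K] x) : x = 0 := by
  obtain ⟨f, hfv, hfu⟩ := Submodule.exists_dual_map_eq_bot_of_notMem hv inferInstance
  have hfu : f u = 0 := by
    rw [← Submodule.mem_bot K, ← hfu]
    exact Submodule.mem_map_of_mem (Submodule.mem_span_singleton_self u)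
  have := congrArg ((TensorProduct.lid K M).toLinearMap ∘ₗ f.rTensor M) h
  simp only [LinearMap.coe_comp, LinearEquiv.coe_coe, Function.comp_apply, LinearMap.rTensor_tmul,
    TensorProduct.lid_tmul, hfu, zero_smul] at this
  exact (smul_eq_zero.1 this.symm).resolve_left hfv

theorem notMem_span_one_of_pow_eq {k L : Type*} [Field k] [Field L] [Algebra k L] {n : ℕ}
    {a : k} {b : L} (ha : ∀ c : k, c ^ n ≠ a) (hb : b ^ n = algebraMap k L a) :
    b ∉ k ∙ (1 : L) := by
  rw [Submodule.mem_span_singleton]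
  rintro ⟨c, hc⟩
  rw [← Algebra.algebraMap_eq_smul_one] at hc
  exact ha c <| (algebraMap k L).injective <| by rw [map_pow, hc, hb]

section TensorPow

variable {k L R : Type*} [Field k] [Field L] [Algebra k L] [CommRing R] [Algebra k R] {p : ℕ}
  [Fact p.Prime] [CharP k p] {a : k} {b : L} {x y : R}
  (hb : b ^ p = algebraMap k L a) (hxy : y ^ p = x + algebraMap k R a * x ^ p)
include hb hxy

theorem one_tmul_sub_tmul_pow : ((1 : L) ⊗ₜ[k] y - b ⊗ₜ[k] x) ^ p = 1 ⊗ₜ x := by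
  nontriviality L ⊗[k] R
  have := charP_of_injective_algebraMap' k (A := L ⊗[k] R) p
  rw [sub_pow_char, Algebra.TensorProduct.tmul_pow, Algebra.TensorProduct.tmul_pow,
    one_pow, hb, hxy, tmul_add, ← Algebra.smul_def, ← smul_tmul,
    ← Algebra.algebraMap_eq_smul_one, add_sub_cancel_right]

theorem aeval_one_tmul_sub_tmul :
    aeval ((1 : L) ⊗ₜ[k] y - b ⊗ₜ[k] x) (X + C b * X ^ p) = 1 ⊗ₜ y := by
  rw [map_add, map_mul, map_pow, aeval_X, aeval_C, one_tmul_sub_tmul_pow hb hxy,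
    Algebra.TensorProduct.algebraMap_apply, Algebra.algebraMap_self_apply,
    Algebra.TensorProduct.tmul_mul_tmul, one_mul, mul_one, sub_add_cancel]

end TensorPow

namespace FormOfAffineLine

variable {k : Type*} [Field k] (p : ℕ) (a : k)

noncomputable abbrev relation : MvPolynomial (Fin 2) k :=
  MvPolynomial.X 1 ^ p - MvPolynomial.X 0 - MvPolynomial.C a * MvPolynomial.X 0 ^ p

abbrev CoordRing := MvPolynomial (Fin 2) k ⧸ Ideal.span {relation p a}

noncomputable def x : CoordRing p a := Ideal.Quotient.mk _ (MvPolynomial.X 0)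

noncomputable def y : CoordRing p a := Ideal.Quotient.mk _ (MvPolynomial.X 1)

theorem y_pow : y p a ^ p = x p a + algebraMap k _ a * x p a ^ p := by
  rw [← sub_eq_zero, ← sub_sub, ← Ideal.Quotient.mk_singleton_self (relation p a)]
  rfl

theorem x_dvd_y_pow [hp : Fact p.Prime] : x p a ∣ y p a ^ p :=
  ⟨1 + algebraMap k _ a * x p a ^ (p - 1), by
    rw [y_pow, mul_add, mul_one, mul_left_comm, ← pow_succ', Nat.sub_add_cancel hp.out.one_le]⟩

variable {L : Type*} [Field L] [Algebra k L] (b : L)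

noncomputable def param : MvPolynomial (Fin 2) k →ₐ[k] L[X] :=
  MvPolynomial.aeval ![X ^ p, X + C b * X ^ p]

theorem X_pow_dvd_param_sub (P : MvPolynomial (Fin 2) k) :
    (X : L[X]) ^ p ∣ param p b P - mapAlg k L (MvPolynomial.aeval ![0, X] P) := by
  let π := Ideal.Quotient.mkₐ k (Ideal.span {(X : L[X]) ^ p})
  have h : π.comp (param p b) = π.comp ((mapAlg k L).comp (MvPolynomial.aeval ![0, X])) := by
    refine MvPolynomial.algHom_ext fun i => ?_
    fin_cases i <;> simp [param, π, mapAlg_eq_map]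
  rw [← Ideal.mem_span_singleton, ← Ideal.Quotient.mk_eq_mk_iff_sub_mem]
  exact AlgHom.congr_fun h P

variable [hp : Fact p.Prime] [CharP k p] {a b}

theorem param_relation (hb : b ^ p = algebraMap k L a) : param p b (relation p a) = 0 := by
  have := charP_of_injective_algebraMap (algebraMap k L).injective p
  simp [relation, param, add_pow_char, mul_pow, ← C_pow, hb, Polynomial.algebraMap_apply]

section Parametrization

variable (hb : b ^ p = algebraMap k L a)
include hb

noncomputable def toPoly : CoordRing p a →ₐ[k] L[X] :=
  Ideal.Quotient.liftₐ _ (param p b) fun _ h => by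
    obtain ⟨c, rfl⟩ := Ideal.mem_span_singleton'.1 h
    rw [map_mul, param_relation p hb, mul_zero]

theorem toPoly_mk (P : MvPolynomial (Fin 2) k) :
    toPoly p hb (Ideal.Quotient.mk _ P) = param p b P :=
  rfl

theorem toPoly_x : toPoly p hb (x p a) = X ^ p := by
  simp [x, toPoly_mk, param]

theorem toPoly_y : toPoly p hb (y p a) = X + C b * X ^ p := by
  simp [y, toPoly_mk, param]

noncomputable def baseChange : L ⊗[k] CoordRing p a →ₐ[L] L[X] :=
  Algebra.TensorProduct.lift (Algebra.ofId L L[X]) (toPoly p hb) fun _ _ => .all _ _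

theorem baseChange_tmul (c : L) (z : CoordRing p a) :
    baseChange p hb (c ⊗ₜ z) = C c * toPoly p hb z := by
  simp [baseChange, Algebra.ofId_apply, Polynomial.algebraMap_eq]

noncomputable def tensorEquiv : L ⊗[k] CoordRing p a ≃ₐ[L] L[X] :=
  AlgEquiv.ofAlgHom (baseChange p hb) (aeval (1 ⊗ₜ y p a - b ⊗ₜ x p a))
    (algHom_ext <| by simp [baseChange_tmul, toPoly_x, toPoly_y])
    (by
      refine Algebra.TensorProduct.ext (by ext) <| Ideal.Quotient.algHom_ext _ <|
        MvPolynomial.algHom_ext fun i => ?_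
      fin_cases i
      · change aeval _ (baseChange p hb (1 ⊗ₜ x p a)) = (1 : L) ⊗ₜ[k] x p a
        rw [baseChange_tmul, C_1, one_mul, toPoly_x, aeval_X_pow,
          one_tmul_sub_tmul_pow hb (y_pow p a)]
      · change aeval _ (baseChange p hb (1 ⊗ₜ y p a)) = (1 : L) ⊗ₜ[k] y p a
        rw [baseChange_tmul, C_1, one_mul, toPoly_y, aeval_one_tmul_sub_tmul hb (y_pow p a)])

theorem baseChange_injective : Function.Injective (baseChange p hb) :=
  (tensorEquiv p hb).injective

theorem toPoly_injective : Function.Injective (toPoly p hb) := fun z w h =>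
  Algebra.TensorProduct.includeRight_injective (A := L) (algebraMap k L).injective <|
    baseChange_injective p hb <| by simp [baseChange_tmul, h]

theorem x_ne_zero : x p a ≠ 0 := fun h => by
  have := congrArg (toPoly p hb) h
  rw [toPoly_x, map_zero] at this
  exact pow_ne_zero p X_ne_zero this

theorem not_isUnit_x : ¬ IsUnit (x p a) := fun h => by
  have := h.map (toPoly p hb)
  rw [toPoly_x, isUnit_pow_iff hp.out.ne_zero] at this
  exact not_isUnit_X this

theorem coeff_toPoly_mem_range (z : CoordRing p a) {n : ℕ} (hn : n < p) :
    (toPoly p hb z).coeff n ∈ Set.range (algebraMap k L) := by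
  obtain ⟨P, rfl⟩ := Ideal.Quotient.mk_surjective z
  have := X_pow_dvd_iff.1 (X_pow_dvd_param_sub p b P) n hn
  rw [coeff_sub, sub_eq_zero, mapAlg_eq_map, coeff_map] at this
  exact ⟨_, this.symm⟩

variable (ha : ∀ c : k, c ^ p ≠ a)
include ha

theorem eq_zero_of_toPoly_eq_C_mul {z w : CoordRing p a}
    (h : toPoly p hb z = C b * toPoly p hb w) : w = 0 :=
  eq_zero_of_tmul_eq_tmul_of_notMem_span (notMem_span_one_of_pow_eq ha hb) <|
    baseChange_injective p hb <| by simpa [baseChange_tmul] using h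

theorem exists_eq_algebraMap_of_toPoly_dvd_X {q : CoordRing p a} (hq : toPoly p hb q ∣ X) :
    ∃ γ : k, q = algebraMap k _ γ := by
  have hdeg : (toPoly p hb q).natDegree ≤ 1 := by simpa using natDegree_le_of_dvd hq X_ne_zero
  obtain ⟨γ₀, hγ₀⟩ := coeff_toPoly_mem_range p hb q hp.out.pos
  obtain ⟨γ₁, hγ₁⟩ := coeff_toPoly_mem_range p hb q hp.out.one_lt
  have hq : toPoly p hb q = C (algebraMap k L γ₁) * X + C (algebraMap k L γ₀) := by
    rw [hγ₀, hγ₁]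
    exact eq_X_add_C_of_natDegree_le_one hdeg
  have hγ₁ : γ₁ = 0 := by
    have : γ₁ • x p a = 0 := eq_zero_of_toPoly_eq_C_mul p hb ha
      (z := algebraMap k _ γ₀ + γ₁ • y p a - q) <| by
        simp [hq, toPoly_x, toPoly_y, Algebra.smul_def, Polynomial.algebraMap_apply]
        ring
    exact (smul_eq_zero.1 this).resolve_right (x_ne_zero p hb)
  refine ⟨γ₀, toPoly_injective p hb ?_⟩
  simp [hq, hγ₁]

end Parametrization

theorem not_uniqueFactorizationMonoid (ha : ∀ c : k, c ^ p ≠ a) [IsDomain (CoordRing p a)] :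
    ¬ UniqueFactorizationMonoid (CoordRing p a) := by
  intro _
  obtain ⟨b, hb⟩ :=
    IsAlgClosed.exists_pow_nat_eq (algebraMap k (AlgebraicClosure k) a) hp.out.pos
  obtain ⟨q, hq, hqx⟩ :=
    WfDvdMonoid.exists_irreducible_factor (not_isUnit_x p hb) (x_ne_zero p hb)
  have hq := UniqueFactorizationMonoid.irreducible_iff_prime.1 hq
  have hqy : q ∣ y p a := hq.dvd_of_dvd_pow (hqx.trans (x_dvd_y_pow p a))
  have hqX : toPoly p hb q ∣ X := by
    have := dvd_sub (map_dvd (toPoly p hb) hqy) ((map_dvd (toPoly p hb) hqx).mul_left (C b))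
    rwa [toPoly_x, toPoly_y, add_sub_cancel_right] at this
  obtain ⟨γ, rfl⟩ := exists_eq_algebraMap_of_toPoly_dvd_X p hb ha hqX
  have hγ : γ ≠ 0 := by
    rintro rfl
    exact hq.ne_zero (map_zero _)
  exact hq.not_isUnit ((isUnit_iff_ne_zero.2 hγ).map _)

end FormOfAffineLine

theorem stmt5_general (k : Type*) [Field k] (p : ℕ) [hp : Fact p.Prime] [CharP k p]
    (a : k) (ha : ∀ c : k, c ^ p ≠ a)
    (L : Type*) [Field L] [Algebra k L] (b : L)
    (hb : b ^ p = algebraMap k L a) :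
    (¬ ∃ h : IsDomain (MvPolynomial (Fin 2) k ⧸ Ideal.span
        {(MvPolynomial.X 1 : MvPolynomial (Fin 2) k) ^ p - MvPolynomial.X 0
          - MvPolynomial.C a * MvPolynomial.X 0 ^ p}),
      letI := h;
      UniqueFactorizationMonoid (MvPolynomial (Fin 2) k ⧸ Ideal.span
        {(MvPolynomial.X 1 : MvPolynomial (Fin 2) k) ^ p - MvPolynomial.X 0
          - MvPolynomial.C a * MvPolynomial.X 0 ^ p})) ∧
    Nonempty ((TensorProduct k L (MvPolynomial (Fin 2) k ⧸ Ideal.span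
        {(MvPolynomial.X 1 : MvPolynomial (Fin 2) k) ^ p - MvPolynomial.X 0
          - MvPolynomial.C a * MvPolynomial.X 0 ^ p})) ≃ₐ[L] Polynomial L) :=
  ⟨by rintro ⟨_, h⟩; exact FormOfAffineLine.not_uniqueFactorizationMonoid p ha h,
    ⟨FormOfAffineLine.tensorEquiv p hb⟩⟩

/-- Let `k` be a field of characteristic `p ≥ 2` and `a ∈ k \ kᵖ`.
Then `B = k[X,Y]/(Yᵖ - X - a Xᵖ)` is not a UFD, but `B ⊗_k k(a^{1/p})` is a polynomial
ring in one variable over `L = k(a^{1/p})` (here `L/k` is any extension generated by a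
`p`-th root `b` of `a`). -/
theorem stmt5 (k : Type*) [Field k] (p : ℕ) [hp : Fact p.Prime] [CharP k p]
    (a : k) (ha : ∀ c : k, c ^ p ≠ a)
    (L : Type*) [Field L] [Algebra k L] (b : L)
    (hb : b ^ p = algebraMap k L a) (hgen : Algebra.adjoin k {b} = ⊤) :
    (¬ ∃ h : IsDomain (MvPolynomial (Fin 2) k ⧸ Ideal.span
        {(MvPolynomial.X 1 : MvPolynomial (Fin 2) k) ^ p - MvPolynomial.X 0
          - MvPolynomial.C a * MvPolynomial.X 0 ^ p}),
      letI := h;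
      UniqueFactorizationMonoid (MvPolynomial (Fin 2) k ⧸ Ideal.span
        {(MvPolynomial.X 1 : MvPolynomial (Fin 2) k) ^ p - MvPolynomial.X 0
          - MvPolynomial.C a * MvPolynomial.X 0 ^ p})) ∧
    Nonempty ((TensorProduct k L (MvPolynomial (Fin 2) k ⧸ Ideal.span
        {(MvPolynomial.X 1 : MvPolynomial (Fin 2) k) ^ p - MvPolynomial.X 0
          - MvPolynomial.C a * MvPolynomial.X 0 ^ p})) ≃ₐ[L] Polynomial L) :=
  stmt5_general k p (hp := hp) a ha L b hb
end

section
/- Let 𝔽₂ be the field with two elements, t an indeterminate, L = 𝔽₂(t) and k = 𝔽₂(t²). Let A = k[U,V,W]/(W² + U + t²U² + V²/t²). Then A ⊗_k L is isomorphic, as an L-algebra, to a polynomial ring in two variables over L; i.e., A is an 𝔸²-form with respect to L over k. -/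
/-!
Base change commutes with taking the quotient, so `A ⊗_k L = L[U,V,W]/(g)` with `g` the same
polynomial. Over `L` the coefficients `t²`, `t⁻²` are squares and squaring is additive in
characteristic `2`, so `g = U + (W + tU + t⁻¹V)²`. In the coordinates `V` and
`W' = W + tU + t⁻¹V` the relation just expresses `U` as `-W'²`, hence the quotient is `L[V, W']`.
-/

open MvPolynomial TensorProduct

noncomputable def MvPolynomial.baseChangeQuotientSpanEquiv {σ k L : Type*} [CommRing k]
    [CommRing L] [Algebra k L] (f : MvPolynomial σ k) :
    L ⊗[k] (MvPolynomial σ k ⧸ Ideal.span {f}) ≃ₐ[L]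
      MvPolynomial σ L ⧸ Ideal.span {map (algebraMap k L) f} :=
  (Algebra.TensorProduct.tensorQuotientEquiv L _ L _).trans <|
    Ideal.quotientEquivAlg _ _ (algebraTensorAlgEquiv k L) <| by
      rw [Ideal.map_span, Set.image_singleton, Ideal.map_span, Set.image_singleton]
      simp

section GraphPoly

variable {R : Type*} [CommRing R] (α β : R)

noncomputable def graphPoly : MvPolynomial (Fin 3) R :=
  X 0 + (X 2 + C α * X 0 + C β * X 1) ^ 2

local notation "Q" => MvPolynomial (Fin 3) R ⧸ Ideal.span {graphPoly α β}

theorem graphPoly_eq_of_charTwo [CharP R 2] :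
    graphPoly α β = X 2 ^ 2 + X 0 + C (α ^ 2) * X 0 ^ 2 + C (β ^ 2) * X 1 ^ 2 := by
  simp only [graphPoly, CharTwo.add_sq, mul_pow, map_pow]
  ring

noncomputable def graphParam : MvPolynomial (Fin 3) R →ₐ[R] MvPolynomial (Fin 2) R :=
  aeval ![-X 1 ^ 2, X 0, X 1 + C α * X 1 ^ 2 - C β * X 0]

theorem graphParam_graphPoly : graphParam α β (graphPoly α β) = 0 := by
  simp [graphParam, graphPoly]
  ring

noncomputable def graphParamQuot : Q →ₐ[R] MvPolynomial (Fin 2) R :=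
  Ideal.Quotient.liftₐ _ (graphParam α β) fun a ha => by
    obtain ⟨c, rfl⟩ := Ideal.mem_span_singleton'.mp ha
    rw [map_mul, graphParam_graphPoly, mul_zero]

theorem graphParamQuot_mk (p : MvPolynomial (Fin 3) R) :
    graphParamQuot α β (Ideal.Quotient.mk _ p) = graphParam α β p := rfl

noncomputable def graphCoord : MvPolynomial (Fin 2) R →ₐ[R] Q :=
  aeval ![Ideal.Quotient.mk _ (X 1), Ideal.Quotient.mk _ (X 2 + C α * X 0 + C β * X 1)]

theorem mk_sq_eq_neg_mk_X_zero :
    Ideal.Quotient.mk (Ideal.span {graphPoly α β}) (X 2 + C α * X 0 + C β * X 1) ^ 2 =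
      -Ideal.Quotient.mk _ (X 0) := by
  rw [← map_pow, eq_neg_iff_add_eq_zero, ← map_add, add_comm, Ideal.Quotient.eq_zero_iff_mem]
  exact Ideal.mem_span_singleton_self _

theorem graphParamQuot_comp_graphCoord :
    (graphParamQuot α β).comp (graphCoord α β) = AlgHom.id R _ := by
  refine MvPolynomial.algHom_ext fun i => ?_
  fin_cases i <;> simp [graphCoord, graphParamQuot_mk, graphParam]
  ring

theorem graphCoord_comp_graphParamQuot :
    (graphCoord α β).comp (graphParamQuot α β) = AlgHom.id R _ := by
  have hC (a : R) : Ideal.Quotient.mk (Ideal.span {graphPoly α β}) (C a) = algebraMap R Q a :=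
    Ideal.Quotient.mk_algebraMap _ _ _
  have hrel := mk_sq_eq_neg_mk_X_zero α β
  simp only [map_add, map_mul, hC] at hrel
  refine Ideal.Quotient.algHom_ext R (MvPolynomial.algHom_ext fun i => ?_)
  fin_cases i <;> simp [graphCoord, graphParam, graphParamQuot_mk, hC]
  · rw [hrel, neg_neg]
  · rw [hrel]
    ring

noncomputable def quotientSpanGraphPolyEquiv : Q ≃ₐ[R] MvPolynomial (Fin 2) R :=
  AlgEquiv.ofAlgHom (graphParamQuot α β) (graphCoord α β)
    (graphParamQuot_comp_graphCoord α β) (graphCoord_comp_graphParamQuot α β)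

end GraphPoly

theorem stmt6_general (L : Type) [Field L] [Algebra (ZMod 2) L] (t : L)
    (k : Type) [Field k] [Algebra k L]
    (t2 : k) (ht2 : algebraMap k L t2 = t ^ 2)
    (I : Ideal (MvPolynomial (Fin 3) k))
    (hI : I = Ideal.span
      {(MvPolynomial.X 2 : MvPolynomial (Fin 3) k) ^ 2 + MvPolynomial.X 0
        + MvPolynomial.C t2 * MvPolynomial.X 0 ^ 2
        + MvPolynomial.C t2⁻¹ * MvPolynomial.X 1 ^ 2}) :
    Nonempty ((TensorProduct k L (MvPolynomial (Fin 3) k ⧸ I))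
      ≃ₐ[L] MvPolynomial (Fin 2) L) := by
  subst hI
  have : CharP L 2 := charP_of_injective_algebraMap (algebraMap (ZMod 2) L).injective 2
  have hbase : map (algebraMap k L) (X 2 ^ 2 + X 0 + C t2 * X 0 ^ 2 + C t2⁻¹ * X 1 ^ 2) =
      graphPoly t t⁻¹ := by
    simp [graphPoly_eq_of_charTwo, ht2]
  exact ⟨(baseChangeQuotientSpanEquiv _).trans <|
    (Ideal.quotientEquivAlgOfEq L (by rw [hbase])).trans (quotientSpanGraphPolyEquiv t t⁻¹)⟩

/-- `A ⊗_k L` is `L`-isomorphic to a polynomial ring in two variables over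
`L`, i.e. `A` is an `𝔸²`-form over `k = 𝔽₂(t²)` with respect to `L = 𝔽₂(t)`. -/
theorem stmt6 (L : Type) [Field L] [Algebra (ZMod 2) L] (t : L)
    (htr : Transcendental (ZMod 2) t)
    (htL : IntermediateField.adjoin (ZMod 2) ({t} : Set L) = ⊤)
    (k : Type) [Field k] [Algebra (ZMod 2) k] [Algebra k L] [IsScalarTower (ZMod 2) k L]
    (t2 : k) (ht2 : algebraMap k L t2 = t ^ 2)
    (hk : IntermediateField.adjoin (ZMod 2) ({t2} : Set k) = ⊤)
    (I : Ideal (MvPolynomial (Fin 3) k))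
    (hI : I = Ideal.span
      {(MvPolynomial.X 2 : MvPolynomial (Fin 3) k) ^ 2 + MvPolynomial.X 0
        + MvPolynomial.C t2 * MvPolynomial.X 0 ^ 2
        + MvPolynomial.C t2⁻¹ * MvPolynomial.X 1 ^ 2}) :
    Nonempty ((TensorProduct k L (MvPolynomial (Fin 3) k ⧸ I))
      ≃ₐ[L] MvPolynomial (Fin 2) L) :=
  stmt6_general L t k t2 ht2 I hI
end

section
/- Let 𝔽₂ be the field with two elements, t an indeterminate, k = 𝔽₂(t²), and A = k[U,V,W]/(W² + U + t²U² + V²/t²). Then A is a unique factorization domain. -/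
/-! `L = 𝔽₂(t)`: a field `L` with algebra structure over `𝔽₂ = ZMod 2` together with an
element `t`, transcendental over `𝔽₂`, generating `L` as a field over `𝔽₂`.
`k = 𝔽₂(t²)`: a subfield of `L` (given as a field `k` with an embedding `k → L`)
generated over `𝔽₂` by an element `t2` mapping to `t²`.
`A = k[U,V,W]/(W² + U + t²U² + V²/t²)`: the quotient of `MvPolynomial (Fin 3) k`
(variables `U = X 0`, `V = X 1`, `W = X 2`) by the ideal `I` generated by
`W² + U + t²U² + (t²)⁻¹V²`. -/

open MvPolynomial in
set_option maxHeartbeats 1000000 in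
set_option synthInstance.maxHeartbeats 400000 in
/-- Key algebraic fact: over any field of characteristic 2, with `t2 ≠ 0`, the ring
`k[U,V,W]/(W² + U + t2·U² + t2⁻¹·V²)` is isomorphic to a polynomial ring in two
variables (since `t2·U² + t2⁻¹·V² = t2⁻¹·(V + t2·U)²`, the change of variables
`V ↦ V + t2·U` makes the relation linear in `U`), hence a UFD. -/
theorem stmt7_aux (k : Type) [Field k] [CharP k 2]
    (t2 : k) (ht2 : t2 ≠ 0)
    (I : Ideal (MvPolynomial (Fin 3) k))
    (hI : I = Ideal.span
      {(MvPolynomial.X 2 : MvPolynomial (Fin 3) k) ^ 2 + MvPolynomial.X 0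
        + MvPolynomial.C t2 * MvPolynomial.X 0 ^ 2
        + MvPolynomial.C t2⁻¹ * MvPolynomial.X 1 ^ 2}) :
    ∃ h : IsDomain (MvPolynomial (Fin 3) k ⧸ I),
      letI := h; UniqueFactorizationMonoid (MvPolynomial (Fin 3) k ⧸ I) := by
  set v : Fin 3 → MvPolynomial (Fin 3) k := ![X 0, X 1 + C t2 * X 0, X 2] with hv
  set ψ : MvPolynomial (Fin 3) k →ₐ[k] MvPolynomial (Fin 3) k := aeval v with hψ
  have hv0 : v 0 = X 0 := rfl
  have hv1 : v 1 = X 1 + C t2 * X 0 := rfl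
  have hv2 : v 2 = X 2 := rfl
  have hinv : ψ.comp ψ = AlgHom.id k (MvPolynomial (Fin 3) k) := by
    apply MvPolynomial.algHom_ext
    intro i
    fin_cases i <;>
      simp [hψ, aeval_X, hv0, hv1, hv2, CharTwo.add_self_eq_zero, add_assoc]
  set φ : MvPolynomial (Fin 3) k ≃ₐ[k] MvPolynomial (Fin 3) k :=
    AlgEquiv.ofAlgHom ψ ψ hinv hinv with hφ
  set g0 : MvPolynomial (Fin 3) k := X 0 + X 2 ^ 2 + C t2⁻¹ * X 1 ^ 2 with hg0
  have hgen : ((φ : MvPolynomial (Fin 3) k ≃+* MvPolynomial (Fin 3) k) :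
        MvPolynomial (Fin 3) k →+* MvPolynomial (Fin 3) k) g0 =
      X 2 ^ 2 + X 0 + C t2 * X 0 ^ 2 + C t2⁻¹ * X 1 ^ 2 := by
    have h1 : ((φ : MvPolynomial (Fin 3) k ≃+* MvPolynomial (Fin 3) k) :
          MvPolynomial (Fin 3) k →+* MvPolynomial (Fin 3) k) g0 =
        X 0 + X 2 ^ 2 + C t2⁻¹ * (X 1 + C t2 * X 0) ^ 2 := by
      show ψ g0 = _
      rw [hg0, map_add, map_add, map_mul, map_pow, map_pow, hψ]
      rw [aeval_X, aeval_X, aeval_X, aeval_C, hv0, hv1, hv2]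
      rw [algebraMap_eq]
    have h2 : (C t2⁻¹ : MvPolynomial (Fin 3) k) * C (t2 ^ 2) = C t2 := by
      rw [← C_mul, sq, ← mul_assoc, inv_mul_cancel₀ ht2, one_mul]
    rw [h1, CharTwo.add_sq, mul_pow, ← C_pow, mul_add, ← mul_assoc, h2]
    ring
  have hmap1 : I = (Ideal.span {g0}).map
      ((φ : MvPolynomial (Fin 3) k ≃+* MvPolynomial (Fin 3) k) :
        MvPolynomial (Fin 3) k →+* MvPolynomial (Fin 3) k) := by
    rw [Ideal.map_span, Set.image_singleton, hgen, hI]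
  set h' : MvPolynomial (Fin 2) k := X 1 ^ 2 + C t2⁻¹ * X 0 ^ 2 with hh'
  have him : ((MvPolynomial.finSuccEquiv k 2 :
        MvPolynomial (Fin 3) k ≃+* Polynomial (MvPolynomial (Fin 2) k)) :
        MvPolynomial (Fin 3) k →+* Polynomial (MvPolynomial (Fin 2) k)) g0 =
      Polynomial.X - Polynomial.C h' := by
    show (MvPolynomial.finSuccEquiv k 2) g0 = _
    have e1 : (X 1 : MvPolynomial (Fin 3) k) = X (Fin.succ 0) := rfl
    have e2 : (X 2 : MvPolynomial (Fin 3) k) = X (Fin.succ 1) := rfl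
    have eC : (MvPolynomial.finSuccEquiv k 2) (C t2⁻¹ : MvPolynomial (Fin 3) k)
        = Polynomial.C (C t2⁻¹) := by simp [finSuccEquiv_apply]
    rw [CharTwo.sub_eq_add, hg0, e1, e2, map_add, map_add, map_mul, map_pow, map_pow,
      finSuccEquiv_X_zero, finSuccEquiv_X_succ, finSuccEquiv_X_succ, eC, hh',
      map_add, map_mul, map_pow, map_pow]
    ring
  have hmap2 : Ideal.span {Polynomial.X - Polynomial.C h'} =
      (Ideal.span {g0}).map ((MvPolynomial.finSuccEquiv k 2 :
        MvPolynomial (Fin 3) k ≃+* Polynomial (MvPolynomial (Fin 2) k)) :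
        MvPolynomial (Fin 3) k →+* Polynomial (MvPolynomial (Fin 2) k)) := by
    rw [Ideal.map_span, Set.image_singleton, him]
  set e : (MvPolynomial (Fin 3) k ⧸ I) ≃+* MvPolynomial (Fin 2) k :=
    ((Ideal.quotientEquiv (Ideal.span {g0}) I
        (φ : MvPolynomial (Fin 3) k ≃+* MvPolynomial (Fin 3) k) hmap1).symm.trans
      (Ideal.quotientEquiv (Ideal.span {g0}) (Ideal.span {Polynomial.X - Polynomial.C h'})
        (MvPolynomial.finSuccEquiv k 2 :
          MvPolynomial (Fin 3) k ≃+* Polynomial (MvPolynomial (Fin 2) k)) hmap2)).trans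
      (Polynomial.quotientSpanXSubCAlgEquiv h').toRingEquiv with he
  haveI hdom : IsDomain (MvPolynomial (Fin 3) k ⧸ I) :=
    Function.Injective.isDomain e.toRingHom e.injective
  exact ⟨hdom, e.symm.toMulEquiv.uniqueFactorizationMonoid inferInstance⟩

/-- `A = k[U,V,W]/(W² + U + t²U² + V²/t²)` is a unique factorization
domain. -/
theorem stmt7 (L : Type) [Field L] [Algebra (ZMod 2) L] (t : L)
    (htr : Transcendental (ZMod 2) t)
    (htL : IntermediateField.adjoin (ZMod 2) ({t} : Set L) = ⊤)
    (k : Type) [Field k] [Algebra (ZMod 2) k] [Algebra k L] [IsScalarTower (ZMod 2) k L]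
    (t2 : k) (ht2 : algebraMap k L t2 = t ^ 2)
    (hk : IntermediateField.adjoin (ZMod 2) ({t2} : Set k) = ⊤)
    (I : Ideal (MvPolynomial (Fin 3) k))
    (hI : I = Ideal.span
      {(MvPolynomial.X 2 : MvPolynomial (Fin 3) k) ^ 2 + MvPolynomial.X 0
        + MvPolynomial.C t2 * MvPolynomial.X 0 ^ 2
        + MvPolynomial.C t2⁻¹ * MvPolynomial.X 1 ^ 2}) :
    ∃ h : IsDomain (MvPolynomial (Fin 3) k ⧸ I),
      letI := h; UniqueFactorizationMonoid (MvPolynomial (Fin 3) k ⧸ I) := by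
  haveI : CharP k 2 := charP_of_injective_algebraMap
    (algebraMap (ZMod 2) k).injective 2
  have ht0 : t ≠ 0 := by
    intro h
    exact htr (h ▸ isAlgebraic_zero)
  have ht2ne : t2 ≠ 0 := by
    intro h
    apply ht0
    have := ht2
    rw [h, map_zero] at this
    exact pow_eq_zero_iff (n := 2) (by norm_num) |>.mp this.symm
  exact stmt7_aux k t2 ht2ne I hI
end

section
/- Let k be a non-perfect field of characteristic p > 0, λ ∈ k \ k^p, and m ≥ 2. Let A = k[X,Y,Z,T]/(X^mY − Z^p − λT^p − T), with x,y,z,t the images of X,Y,Z,T. Then the assignments φ(x) = x, φ(t) = t, φ(z) = z + x^m U, φ(y) = y + x^{mp−m}U^p define a nontrivial exponential map φ: A → A[U]. -/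
variable {k A : Type*} [Field k] [CommRing A] [Algebra k A]

/-!
In characteristic `p` the Frobenius identity `(z + xᵐU)ᵖ = zᵖ + x^{mp}Uᵖ` shows that the
proposed images of `x, y, z, t` satisfy `XᵐY - Zᵖ - λTᵖ - T = 0`, so they define a `k`-algebra
map `A → A[U]`. Both axioms of an exponential map are equalities of `k`-algebra maps out of `A`,
so they need only be checked on `x, y, z, t`; there they come down to
`(U + V)^{p^e} = U^{p^e} + V^{p^e}` for `e = 0, 1`. The map moves `z` because `xᵐ ≠ 0`, as seen
at the point `(1, 0, 0, 0)` of the hypersurface.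
-/

open Polynomial

namespace ExpMap

theorem coaction_of_eq_C (φ : A →ₐ[k] A[X]) {a : A} (ha : φ a = C a) :
    (φ a).map φ.toRingHom = (φ a).eval₂ (C.comp C) (X + C X) := by
  simp [ha]

theorem coaction_of_eq_C_add_C_mul_X_pow (q n : ℕ) [ExpChar A q] (φ : A →ₐ[k] A[X])
    {a b : A} (hb : φ b = C b) (ha : φ a = C a + C b * X ^ q ^ n) :
    (φ a).map φ.toRingHom = (φ a).eval₂ (C.comp C) (X + C X) := by
  have : ExpChar A[X][X] q :=
    expChar_of_injective_ringHom (f := C.comp C) (C_injective.comp C_injective) q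
  simp [ha, hb, add_pow_expChar_pow]
  ring

def ofAdjoinEqTop (φ : A →ₐ[k] A[X]) {s : Set A} (hs : Algebra.adjoin k s = ⊤)
    (eval_zero : ∀ a ∈ s, (φ a).eval 0 = a)
    (coaction : ∀ a ∈ s, (φ a).map φ.toRingHom = (φ a).eval₂ (C.comp C) (X + C X)) :
    ExpMap k A where
  toFun := φ
  eval_zero := by
    have : ((aeval (0 : A)).restrictScalars k).comp φ = AlgHom.id k A :=
      AlgHom.ext_of_adjoin_eq_top hs fun a ha => by simpa using eval_zero a ha
    exact fun a => by simpa using AlgHom.congr_fun this a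
  coaction := by
    have hC : algebraMap A A[X][X] = C.comp C := rfl
    have : (mapAlgHom φ).comp φ = ((aeval (X + C X : A[X][X])).restrictScalars k).comp φ :=
      AlgHom.ext_of_adjoin_eq_top hs fun a ha => by
        simpa [aeval_def, hC] using coaction a ha
    intro a
    simpa [aeval_def, hC] using AlgHom.congr_fun this a

end ExpMap

namespace Hypersurface

noncomputable section

variable (p m : ℕ) (lam : k)

def relation : MvPolynomial (Fin 4) k :=
  MvPolynomial.X 0 ^ m * MvPolynomial.X 1 - MvPolynomial.X 2 ^ p
    - MvPolynomial.C lam * MvPolynomial.X 3 ^ p - MvPolynomial.X 3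

abbrev CoordRing := MvPolynomial (Fin 4) k ⧸ Ideal.span {relation p m lam}

variable {p m lam}

def gen (i : Fin 4) : CoordRing p m lam := Ideal.Quotient.mk _ (MvPolynomial.X i)

theorem adjoin_range_gen :
    Algebra.adjoin k (Set.range (gen : Fin 4 → CoordRing p m lam)) = ⊤ := by
  have : Set.range (gen : Fin 4 → CoordRing p m lam) =
      Ideal.Quotient.mkₐ k _ '' Set.range MvPolynomial.X := by
    rw [← Set.range_comp]; rfl
  rw [this, Algebra.adjoin_image, MvPolynomial.adjoin_range_X, Algebra.map_top,
    AlgHom.range_eq_top]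
  exact Ideal.Quotient.mkₐ_surjective k _

theorem gen_relation :
    gen 0 ^ m * gen 1 - gen 2 ^ p - algebraMap k _ lam * gen 3 ^ p - gen 3
      = (0 : CoordRing p m lam) :=
  Ideal.Quotient.eq_zero_iff_mem.mpr (Ideal.subset_span rfl)

section Lift

variable {B : Type*} [CommRing B] [Algebra k B]

def liftₐ (v : Fin 4 → B) (hv : MvPolynomial.aeval v (relation p m lam) = 0) :
    CoordRing p m lam →ₐ[k] B :=
  Ideal.Quotient.liftₐ _ (MvPolynomial.aeval v) fun a ha => by
    obtain ⟨c, rfl⟩ := Ideal.mem_span_singleton'.mp ha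
    simp [hv]

@[simp]
theorem liftₐ_gen (v : Fin 4 → B) (hv : MvPolynomial.aeval v (relation p m lam) = 0)
    (i : Fin 4) : liftₐ v hv (gen i) = v i :=
  (Ideal.Quotient.lift_mk _ _ _).trans (MvPolynomial.aeval_X v i)

end Lift

theorem gen_zero_pow_ne_zero (hp : p ≠ 0) (n : ℕ) : (gen 0 : CoordRing p m lam) ^ n ≠ 0 := by
  have hpoint : MvPolynomial.aeval ![(1 : k), 0, 0, 0] (relation p m lam) = 0 := by
    simp [relation, hp]
  intro h
  simpa using congrArg (liftₐ _ hpoint) h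

variable [ExpChar k p]

instance : ExpChar (CoordRing p m lam) p :=
  have : Nontrivial (CoordRing p m lam) :=
    nontrivial_of_ne _ _ (gen_zero_pow_ne_zero (expChar_ne_zero k p) 0)
  expChar_of_injective_algebraMap (algebraMap k _).injective p

variable (p m lam) in
def expMapImages : Fin 4 → (CoordRing p m lam)[X] :=
  ![C (gen 0), C (gen 1) + C (gen 0 ^ (m * p - m)) * X ^ p, C (gen 2) + C (gen 0 ^ m) * X,
    C (gen 3)]

theorem aeval_expMapImages_relation :
    MvPolynomial.aeval (expMapImages p m lam) (relation p m lam) = 0 := by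
  have : ExpChar (CoordRing p m lam)[X] p :=
    expChar_of_injective_algebraMap C_injective p
  have hmp : m + (m * p - m) = m * p :=
    Nat.add_sub_cancel' (Nat.le_mul_of_pos_right m (expChar_pos k p))
  have hx : C (gen 0) ^ m * C (gen 0) ^ (m * p - m) =
      (C (gen 0 : CoordRing p m lam) ^ m) ^ p := by
    rw [← pow_add, hmp, pow_mul]
  have h := congrArg C (gen_relation (p := p) (m := m) (lam := lam))
  simp only [map_sub, map_mul, map_pow, map_zero] at h
  simp only [relation, expMapImages, map_sub, map_mul, map_pow, MvPolynomial.aeval_X,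
    MvPolynomial.aeval_C, Matrix.cons_val, Polynomial.algebraMap_apply]
  rw [add_pow_expChar (C (gen 2)) (C (gen 0) ^ m * X) p]
  linear_combination h + X ^ p * hx

variable (p m lam) in
def expMapHom : CoordRing p m lam →ₐ[k] (CoordRing p m lam)[X] :=
  liftₐ (expMapImages p m lam) aeval_expMapImages_relation

theorem expMapHom_gen (i : Fin 4) : expMapHom p m lam (gen i) = expMapImages p m lam i :=
  liftₐ_gen _ _ i

variable (p m lam) in
def expMap : ExpMap k (CoordRing p m lam) :=
  ExpMap.ofAdjoinEqTop (expMapHom p m lam) adjoin_range_gen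
    (by
      simp only [Set.forall_mem_range, Fin.forall_fin_succ, expMapHom_gen]
      simp [expMapImages, expChar_ne_zero k p])
    (by
      have hx (n : ℕ) : expMapHom p m lam (gen 0 ^ n) = C (gen 0 ^ n) := by
        simp [expMapHom_gen, expMapImages]
      simp only [Set.forall_mem_range, Fin.forall_fin_succ, IsEmpty.forall_iff, and_true]
      refine ⟨ExpMap.coaction_of_eq_C _ (expMapHom_gen 0),
        ExpMap.coaction_of_eq_C_add_C_mul_X_pow p 1 _ (hx (m * p - m)) ?_,
        ExpMap.coaction_of_eq_C_add_C_mul_X_pow p 0 _ (hx m) ?_,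
        ExpMap.coaction_of_eq_C _ (expMapHom_gen 3)⟩ <;>
      simp [expMapHom_gen, expMapImages])

theorem expMap_nontrivial : (expMap p m lam).Nontrivial := by
  refine ⟨gen 2, fun h => gen_zero_pow_ne_zero (m := m) (lam := lam) (expChar_ne_zero k p) m ?_⟩
  simpa [expMap, ExpMap.ofAdjoinEqTop, expMapHom_gen, expMapImages, coeff_zero_eq_eval_zero] using
    congrArg (coeff · 1) h

end

end Hypersurface

theorem stmt9_general (p : ℕ) (hp : 0 < p) [CharP k p] (lam : k)
    (m : ℕ) :
    letI R := MvPolynomial (Fin 4) k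
    letI I : Ideal R := Ideal.span
      {(MvPolynomial.X 0 : R) ^ m * MvPolynomial.X 1 - MvPolynomial.X 2 ^ p
        - MvPolynomial.C lam * MvPolynomial.X 3 ^ p - MvPolynomial.X 3}
    letI x : R ⧸ I := Ideal.Quotient.mk I (MvPolynomial.X 0)
    letI y : R ⧸ I := Ideal.Quotient.mk I (MvPolynomial.X 1)
    letI z : R ⧸ I := Ideal.Quotient.mk I (MvPolynomial.X 2)
    letI t : R ⧸ I := Ideal.Quotient.mk I (MvPolynomial.X 3)
    ∃ φ : ExpMap k (R ⧸ I),
      φ.toFun x = Polynomial.C x ∧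
      φ.toFun t = Polynomial.C t ∧
      φ.toFun z = Polynomial.C z + Polynomial.C (x ^ m) * Polynomial.X ∧
      φ.toFun y = Polynomial.C y + Polynomial.C (x ^ (m * p - m)) * Polynomial.X ^ p ∧
      ∃ a : R ⧸ I, φ.toFun a ≠ Polynomial.C a := by
  have : NeZero p := ⟨hp.ne'⟩
  have := CharP.char_is_prime_of_pos k p
  exact ⟨Hypersurface.expMap p m lam, Hypersurface.expMapHom_gen 0, Hypersurface.expMapHom_gen 3,
    Hypersurface.expMapHom_gen 2, Hypersurface.expMapHom_gen 1, Hypersurface.expMap_nontrivial⟩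

/-- For `A = k[X,Y,Z,T]/(XᵐY - Zᵖ - λTᵖ - T)` over a non-perfect field of
characteristic `p > 0` with `λ ∉ kᵖ` and `m ≥ 2`, the assignments `φ(x) = x`, `φ(t) = t`,
`φ(z) = z + xᵐ U`, `φ(y) = y + x^{mp-m} Uᵖ` define a nontrivial exponential map on `A`. -/
theorem stmt9 (p : ℕ) (hp : 0 < p) [CharP k p] (lam : k) (hlam : ∀ c : k, c ^ p ≠ lam)
    (m : ℕ) (hm : 2 ≤ m) :
    letI R := MvPolynomial (Fin 4) k
    letI I : Ideal R := Ideal.span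
      {(MvPolynomial.X 0 : R) ^ m * MvPolynomial.X 1 - MvPolynomial.X 2 ^ p
        - MvPolynomial.C lam * MvPolynomial.X 3 ^ p - MvPolynomial.X 3}
    letI x : R ⧸ I := Ideal.Quotient.mk I (MvPolynomial.X 0)
    letI y : R ⧸ I := Ideal.Quotient.mk I (MvPolynomial.X 1)
    letI z : R ⧸ I := Ideal.Quotient.mk I (MvPolynomial.X 2)
    letI t : R ⧸ I := Ideal.Quotient.mk I (MvPolynomial.X 3)
    ∃ φ : ExpMap k (R ⧸ I),
      φ.toFun x = Polynomial.C x ∧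
      φ.toFun t = Polynomial.C t ∧
      φ.toFun z = Polynomial.C z + Polynomial.C (x ^ m) * Polynomial.X ∧
      φ.toFun y = Polynomial.C y + Polynomial.C (x ^ (m * p - m)) * Polynomial.X ^ p ∧
      ∃ a : R ⧸ I, φ.toFun a ≠ Polynomial.C a :=
  stmt9_general p hp lam m
end

section
/- Let k be a field, A an affine integral domain over k, and φ a nontrivial exponential map on A. If there exists x ∈ A with deg_φ(x) = 1, writing φ(x) = x + πU + (higher terms) with leading coefficient π ∈ A^φ, then the localization A_π equals A^φ_π[x], and A_π is isomorphic to a polynomial ring in one variable over A^φ_π. -/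
variable {k A : Type*} [Field k] [CommRing A] [Algebra k A]

open Polynomial

namespace ExpMap

variable (φ : ExpMap k A)

theorem mem_invariants_s11 {a : A} : a ∈ φ.invariants ↔ φ.toFun a = C a := Iff.rfl

theorem coeff_zero_apply (a : A) : (φ.toFun a).coeff 0 = a := by
  rw [coeff_zero_eq_eval_zero, φ.eval_zero]

theorem apply_eq_of_natDegree_le_one {x : A} (hx : (φ.toFun x).natDegree ≤ 1) :
    φ.toFun x = C x + C ((φ.toFun x).coeff 1) * X := by
  conv_lhs => rw [eq_X_add_C_of_natDegree_le_one hx, φ.coeff_zero_apply]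
  ring

theorem map_apply_eq_comp (a : A) :
    (φ.toFun a).map φ.toFun.toRingHom = ((φ.toFun a).map C).comp (X + C X) := by
  rw [φ.coaction, comp, eval₂_map]

theorem mem_invariants_of_apply_eq {x c : A} (hx : φ.toFun x = C x + C c * X) :
    c ∈ φ.invariants := by
  simpa [mem_invariants_s11, hx] using congrArg (coeff · 1) (φ.coaction x)

section Slice

variable {B : Type*} [CommRing B] [Algebra k B] (ψ : ExpMap k B)

/-- `ψ(b)` at `U = (X - s)/c`, written with `d = c⁻¹`. -/
noncomputable def sliceExpansion (s d : B) : B →+* B[X] :=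
  (eval₂RingHom C ((X - C s) * C d)).comp ψ.toFun.toRingHom

theorem sliceExpansion_apply (s d b : B) :
    ψ.sliceExpansion s d b = (ψ.toFun b).comp ((X - C s) * C d) := rfl

theorem eval_sliceExpansion (s d b : B) : (ψ.sliceExpansion s d b).eval s = b := by
  simp [sliceExpansion_apply, eval_comp, ψ.eval_zero]

theorem sliceExpansion_of_mem_invariants (s d : B) {r : B} (hr : r ∈ ψ.invariants) :
    ψ.sliceExpansion s d r = C r := by
  rw [sliceExpansion_apply, ψ.mem_invariants_s11.mp hr, C_comp]

variable {s c d : B}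

theorem sliceExpansion_self (hs : ψ.toFun s = C s + C c * X) (hcd : c * d = 1) :
    ψ.sliceExpansion s d s = X := by
  rw [sliceExpansion_apply, hs]
  simp only [add_comp, mul_comp, C_comp, X_comp]
  have hcd' : C c * C d = (1 : B[X]) := by rw [← C_mul, hcd, C_1]
  linear_combination ((X : B[X]) - C s) * hcd'

theorem map_sliceExpansion (hs : ψ.toFun s = C s + C c * X) (hcd : c * d = 1) (b : B) :
    (ψ.sliceExpansion s d b).map ψ.toFun.toRingHom = (ψ.sliceExpansion s d b).map C := by
  have hc : ψ.toFun c = C c := ψ.mem_invariants_of_apply_eq hs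
  have hd : ψ.toFun d = C d := by
    calc ψ.toFun d = ψ.toFun (d * c) * C d := by
          rw [map_mul, hc, mul_assoc, ← C_mul, hcd, C_1, mul_one]
      _ = C d := by rw [mul_comm d c, hcd, map_one, one_mul]
  -- `ψ` sends `(X - s)/c` to `(X - s)/c - V`, which the shift `U ↦ U + V` of the coaction undoes.
  have hu : (X + C X).comp (((X - C s) * C d).map ψ.toFun.toRingHom) =
      ((X - C s) * C d).map C := by
    simp only [Polynomial.map_mul, Polynomial.map_sub, map_X, map_C, AlgHom.toRingHom_eq_coe,
      RingHom.coe_coe, hs, hd, add_comp, X_comp, C_comp]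
    have hcd' : C (C c) * C (C d) = (1 : B[X][X]) := by rw [← C_mul, ← C_mul, hcd, C_1, C_1]
    simp only [map_add, map_mul]
    linear_combination -C (X : B[X]) * hcd'
  rw [sliceExpansion_apply, Polynomial.map_comp, map_apply_eq_comp, comp_assoc, hu,
    ← Polynomial.map_comp]

theorem bijective_aeval_of_apply_eq (hs : ψ.toFun s = C s + C c * X) (hc : IsUnit c) :
    Function.Bijective (aeval (R := ψ.invariants) s) := by
  obtain ⟨d, hcd⟩ := hc.exists_right_inv
  have hcoeff (b : B) (n : ℕ) : (ψ.sliceExpansion s d b).coeff n ∈ ψ.invariants := by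
    simpa [mem_invariants_s11] using congrArg (coeff · n) (ψ.map_sliceExpansion hs hcd b)
  have hexpand (p : ψ.invariants[X]) :
      ψ.sliceExpansion s d (aeval s p) = p.map (algebraMap ψ.invariants B) := by
    induction p using Polynomial.induction_on' with
    | add p q hp hq => simp [hp, hq]
    | monomial n r =>
      simp [← C_mul_X_pow_eq_monomial, ψ.sliceExpansion_self hs hcd,
        ψ.sliceExpansion_of_mem_invariants s d r.2]
  refine ⟨fun p q hpq => ?_, fun b => ?_⟩
  · refine map_injective (algebraMap ψ.invariants B) Subtype.val_injective ?_
    rw [← hexpand, ← hexpand, hpq]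
  · obtain ⟨p, hp⟩ := (lifts_iff_coeff_lifts (f := algebraMap ψ.invariants B) _).mpr
      fun n => ⟨⟨_, hcoeff b n⟩, rfl⟩
    refine ⟨p, ?_⟩
    rw [← eval_map_algebraMap, ← coe_mapRingHom, hp]
    exact ψ.eval_sliceExpansion s d b

noncomputable def sliceEquiv (hs : ψ.toFun s = C s + C c * X) (hc : IsUnit c) :
    ψ.invariants[X] ≃ₐ[k] B :=
  AlgEquiv.ofBijective ((aeval s).restrictScalars k) (ψ.bijective_aeval_of_apply_eq hs hc)

theorem sliceEquiv_apply (hs : ψ.toFun s = C s + C c * X) (hc : IsUnit c)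
    (p : ψ.invariants[X]) :
    ψ.sliceEquiv hs hc p = aeval s p := rfl

end Slice

section Localization

variable (N : Submonoid φ.invariants) (L : Type*) [CommRing L] [Algebra A L]
  [IsLocalization (N.map φ.invariants.val) L]

theorem isUnit_algebraMap_val (n : N) : IsUnit (algebraMap A L (n : φ.invariants)) :=
  IsLocalization.map_units L (⟨_, Submonoid.mem_map_of_mem φ.invariants.val n.2⟩ :
    N.map φ.invariants.val)

variable [Algebra k L] [IsScalarTower k A L]

theorem isUnit_mapAlgHom_apply (m : N.map φ.invariants.val) :
    IsUnit ((mapAlgHom (IsScalarTower.toAlgHom k A L)).comp φ.toFun m) := by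
  obtain ⟨n, -, hn⟩ := m.2
  have hm : φ.toFun m = C (m : A) := hn ▸ n.2
  rw [AlgHom.comp_apply, hm, coe_mapAlgHom, map_C]
  exact (IsLocalization.map_units L m).map C

noncomputable def localization : ExpMap k L where
  toFun := IsLocalization.liftAlgHom (φ.isUnit_mapAlgHom_apply N L)
  eval_zero l := by
    have : (evalRingHom 0).comp (IsLocalization.lift (φ.isUnit_mapAlgHom_apply N L)) =
        RingHom.id L :=
      IsLocalization.ringHom_ext (N.map φ.invariants.val) <| RingHom.ext fun a => by
        simp [IsLocalization.lift_eq, eval_map, eval₂_at_zero, φ.coeff_zero_apply]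
    exact RingHom.congr_fun this l
  coaction l := by
    set f : L →+* L[X] := IsLocalization.lift (φ.isUnit_mapAlgHom_apply N L)
    have hf : f.comp (algebraMap A L) = (mapRingHom (algebraMap A L)).comp φ.toFun :=
      IsLocalization.lift_comp _
    suffices (mapRingHom f).comp f = (eval₂RingHom (C.comp C) (X + C X)).comp f from
      RingHom.congr_fun this l
    refine IsLocalization.ringHom_ext (N.map φ.invariants.val) <| RingHom.ext fun a => ?_
    have hfa : f (algebraMap A L a) = (φ.toFun a).map (algebraMap A L) :=
      IsLocalization.lift_eq _ _
    simp only [RingHom.comp_apply, coe_mapRingHom, coe_eval₂RingHom, hfa]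
    calc ((φ.toFun a).map (algebraMap A L)).map f
        = ((φ.toFun a).map φ.toFun.toRingHom).map (mapRingHom (algebraMap A L)) := by
          rw [map_map, hf, map_map]; rfl
      _ = (((φ.toFun a).map (algebraMap A L)).map C).comp (X + C X) := by
          rw [map_apply_eq_comp, Polynomial.map_comp, map_map, map_map, mapRingHom_comp_C]
          simp
      _ = _ := by rw [comp, eval₂_map]

theorem localization_apply_algebraMap (a : A) :
    (φ.localization N L).toFun (algebraMap A L a) = (φ.toFun a).map (algebraMap A L) :=
  IsLocalization.lift_eq _ _

theorem algebraMap_mem_invariants_localization {a : A} (ha : a ∈ φ.invariants) :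
    algebraMap A L a ∈ (φ.localization N L).invariants := by
  rw [mem_invariants_s11, localization_apply_algebraMap, φ.mem_invariants_s11.mp ha, map_C]

theorem exists_mul_mem_invariants_of_algebraMap_mem {a : A}
    (ha : algebraMap A L a ∈ (φ.localization N L).invariants) :
    ∃ n ∈ N, (n : A) * a ∈ φ.invariants := by
  let := Polynomial.algebra A L
  have := Polynomial.isLocalization (N.map φ.invariants.val) L
  have h : algebraMap A[X] L[X] (φ.toFun a) = algebraMap A[X] L[X] (C a) := by
    simpa [mem_invariants_s11, localization_apply_algebraMap] using ha
  obtain ⟨⟨_, _, ⟨n, hn, rfl⟩, rfl⟩, hm⟩ :=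
    IsLocalization.exists_of_eq (M := (N.map φ.invariants.val).map C) h
  refine ⟨n, hn, ?_⟩
  rw [mem_invariants_s11, map_mul, φ.mem_invariants_s11.mp n.2, C_mul]
  exact hm

noncomputable def invariantsLocalizationHom : Localization N →ₐ[k] L :=
  IsLocalization.liftAlgHom (f := (IsScalarTower.toAlgHom k A L).comp φ.invariants.val)
    (φ.isUnit_algebraMap_val N L)

theorem invariantsLocalizationHom_algebraMap (b : φ.invariants) :
    φ.invariantsLocalizationHom N L (algebraMap _ _ b) = algebraMap A L b :=
  IsLocalization.lift_eq _ _

theorem injective_invariantsLocalizationHom :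
    Function.Injective (φ.invariantsLocalizationHom N L) :=
  have : IsLocalization (N.map (φ.invariants.val : φ.invariants →+* A)) L := ‹_›
  IsLocalization.map_injective_of_injective N (Localization N) L Subtype.val_injective

theorem range_invariantsLocalizationHom :
    (φ.invariantsLocalizationHom N L).range = (φ.localization N L).invariants := by
  refine le_antisymm ?_ fun l hl => ?_
  · rintro _ ⟨y, rfl⟩
    have : (φ.localization N L).toFun.toRingHom.comp (φ.invariantsLocalizationHom N L) =
        C.comp (φ.invariantsLocalizationHom N L).toRingHom :=
      IsLocalization.ringHom_ext N <| RingHom.ext fun b => by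
        simpa [invariantsLocalizationHom_algebraMap, mem_invariants_s11] using
          φ.algebraMap_mem_invariants_localization N L b.2
    exact RingHom.congr_fun this y
  · obtain ⟨⟨a, _, n, hn, rfl⟩, hl_mul⟩ := IsLocalization.surj (N.map φ.invariants.val) l
    replace hl_mul : l * algebraMap A L n = algebraMap A L a := hl_mul
    have ha : algebraMap A L a ∈ (φ.localization N L).invariants :=
      hl_mul ▸ mul_mem hl (φ.algebraMap_mem_invariants_localization N L n.2)
    obtain ⟨n', hn', hn'a⟩ := φ.exists_mul_mem_invariants_of_algebraMap_mem N L ha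
    refine ⟨IsLocalization.mk' _ (⟨_, hn'a⟩ : φ.invariants) ⟨n' * n, mul_mem hn' hn⟩,
      (IsLocalization.lift_mk'_spec _ _ _ _).mpr ?_⟩
    change algebraMap A L (n' * a) = algebraMap A L ((n' * n : φ.invariants) : A) * l
    rw [MulMemClass.coe_mul, map_mul, map_mul, ← hl_mul]
    ring

noncomputable def invariantsLocalizationEquiv :
    Localization N ≃ₐ[k] (φ.localization N L).invariants :=
  (AlgEquiv.ofInjective _ (φ.injective_invariantsLocalizationHom N L)).trans
    (Subalgebra.equivOfEq _ _ (φ.range_invariantsLocalizationHom N L))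

theorem invariantsLocalizationEquiv_algebraMap (b : φ.invariants) :
    (φ.invariantsLocalizationEquiv N L (algebraMap _ _ b) : L) = algebraMap A L b :=
  φ.invariantsLocalizationHom_algebraMap N L b

end Localization

end ExpMap

theorem local_slice_general (φ : ExpMap k A) (x : A) (hx : (φ.toFun x).natDegree = 1) :
    ∃ hπ : (φ.toFun x).coeff 1 ∈ φ.invariants,
      ∃ e : Polynomial (Localization.Away (⟨(φ.toFun x).coeff 1, hπ⟩ : φ.invariants))
          ≃ₐ[k] Localization.Away ((φ.toFun x).coeff 1),
        e Polynomial.X = algebraMap A (Localization.Away ((φ.toFun x).coeff 1)) x ∧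
        ∀ b : φ.invariants,
          e (Polynomial.C (algebraMap φ.invariants
              (Localization.Away (⟨(φ.toFun x).coeff 1, hπ⟩ : φ.invariants)) b)) =
            algebraMap A (Localization.Away ((φ.toFun x).coeff 1)) (b : A) := by
  have hφx := φ.apply_eq_of_natDegree_le_one hx.le
  set π := (φ.toFun x).coeff 1
  have hπ : π ∈ φ.invariants := φ.mem_invariants_of_apply_eq hφx
  let N := Submonoid.powers (⟨π, hπ⟩ : φ.invariants)
  let L := Localization.Away π
  have : IsLocalization (N.map φ.invariants.val) L := by
    rw [Submonoid.map_powers]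
    exact Localization.isLocalization
  have hψx : (φ.localization N L).toFun (algebraMap A L x) =
      C (algebraMap A L x) + C (algebraMap A L π) * X := by
    rw [ExpMap.localization_apply_algebraMap, hφx]
    simp
  let e := (mapAlgEquiv (φ.invariantsLocalizationEquiv N L)).trans
    ((φ.localization N L).sliceEquiv hψx (IsLocalization.Away.algebraMap_isUnit π))
  refine ⟨hπ, e, ?_, fun b => ?_⟩
  · rw [AlgEquiv.trans_apply, coe_mapAlgEquiv, map_X, ExpMap.sliceEquiv_apply, aeval_X]
  · rw [AlgEquiv.trans_apply, coe_mapAlgEquiv, map_C, ExpMap.sliceEquiv_apply, aeval_C]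
    exact φ.invariantsLocalizationEquiv_algebraMap N L b

/-- local slice: Let `A` be an affine domain over `k`, `φ` a nontrivial
exponential map on `A` and `x ∈ A` with `deg_φ(x) = 1`, say `φ(x) = x + πU`.  Then
`π ∈ A^φ` and `A_π = A^φ_π[x] ≅ (A^φ_π)^{[1]}`. -/
theorem local_slice [IsDomain A] [Algebra.FiniteType k A] (φ : ExpMap k A)
    (hφ : φ.Nontrivial) (x : A) (hx : (φ.toFun x).natDegree = 1) :
    ∃ hπ : (φ.toFun x).coeff 1 ∈ φ.invariants,
      ∃ e : Polynomial (Localization.Away (⟨(φ.toFun x).coeff 1, hπ⟩ : φ.invariants))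
          ≃ₐ[k] Localization.Away ((φ.toFun x).coeff 1),
        e Polynomial.X = algebraMap A (Localization.Away ((φ.toFun x).coeff 1)) x ∧
        ∀ b : φ.invariants,
          e (Polynomial.C (algebraMap φ.invariants
              (Localization.Away (⟨(φ.toFun x).coeff 1, hπ⟩ : φ.invariants)) b)) =
            algebraMap A (Localization.Away ((φ.toFun x).coeff 1)) (b : A) :=
  local_slice_general φ x hx
end

section
/- Let k be a field, A an affine integral domain over k with ML(A) = A (i.e., A is rigid: every exponential map on A is trivial), and suppose B is a k-algebra with A^{[1]} ≅_k B^{[1]} and trdeg_k(B) = trdeg_k(A). If A is algebraically closed in B^{[1]} under the identification, then A = B. -/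
variable {k A : Type*} [Field k] [CommRing A] [Algebra k A]

/-!
Let `φ` be an exponential map of `A[X]`, with higher derivations `D j`, that moves a generator
of `A`. Let `r / s ≥ 0` be the largest slope `(deg D_j p - deg p) / j` over
`p ∈ {X} ∪ C(generators)`, and give `X` weight `s` and the parameter of `φ` weight `-r`.
Keeping only the coefficient of `X ^ (n + r j / s)` in `D j (u X^n)` gives the associated graded
exponential map; its series are multiplicative in `(n, u)`, and for `n = 0` it is an
exponential map of `A`, hence trivial by rigidity. At a pair `(p, j)` where the slope is
attained, the kept coefficient is the leading coefficient of `D j p`, so the graded map moves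
`p`. For a generator this contradicts rigidity; for `X` it is impossible outright, because if
`J > 0` were the top degree of the graded series of `X`, the top term `b X^m` of `D J X` would be
a graded invariant whose graded series, by multiplicativity, has degree at least `m J`.

Applied to the translation of `B[X]` pulled back along `e`, this puts `e(A)` inside `B`; since
`B[X] = e(A)[e(X)]` and `B` is a domain, degrees in `X` multiply and `e(A) = B`.
-/

open Polynomial Finset.HasAntidiagonal

namespace Polynomial

theorem hasseDeriv_map {R S : Type*} [Semiring R] [Semiring S] (f : R →+* S) (i : ℕ) (p : R[X]) :
    hasseDeriv i (p.map f) = (hasseDeriv i p).map f := by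
  ext n
  simp [hasseDeriv_coeff, coeff_map]

theorem coeff_eval₂_X_add_C_X {R : Type*} [CommSemiring R] (q : R[X]) (i : ℕ) :
    (q.eval₂ (C.comp C) (X + C X)).coeff i = hasseDeriv i q := by
  have h : q.eval₂ (C.comp C) (X + C X) = taylor (X : R[X]) (q.map C) := by
    rw [taylor_apply, comp, eval₂_map]
  rw [h, taylor_coeff, hasseDeriv_map, eval_map, eval₂_C_X]

noncomputable def ofSupportFinite {R : Type*} [Semiring R] (f : ℕ → R)
    (hf : (Function.support f).Finite) : R[X] :=
  ofFinsupp (.ofCoeff (Finsupp.ofSupportFinite f hf))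

@[simp]
theorem coeff_ofSupportFinite {R : Type*} [Semiring R] (f : ℕ → R)
    (hf : (Function.support f).Finite) (j : ℕ) : (ofSupportFinite f hf).coeff j = f j :=
  rfl

theorem natDegree_eq_zero_of_hasseDeriv_eq_zero {R : Type*} [Semiring R] {q : R[X]}
    (h : ∀ j, 0 < j → hasseDeriv j q = 0) : q.natDegree = 0 := by
  by_contra hq
  have hlc := hasseDeriv_natDegree_eq_C (f := q) ▸ h _ (Nat.pos_of_ne_zero hq)
  rw [C_eq_zero, leadingCoeff_eq_zero] at hlc
  simp [hlc] at hq

section WeightCoeff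

variable {R : Type*} [CommSemiring R] {s M : ℕ} {p q : R[X]}

theorem mul_natDegree_add_le_of_le (hp : s * p.natDegree ≤ M) (hq : s * q.natDegree ≤ M) :
    s * (p + q).natDegree ≤ M :=
  (Nat.mul_le_mul_left s (natDegree_add_le p q)).trans
    (by rw [← Nat.mul_max_mul_left]; exact max_le hp hq)

theorem mul_natDegree_sum_le_of_le {ι : Type*} (t : Finset ι) (f : ι → R[X])
    (h : ∀ i ∈ t, s * (f i).natDegree ≤ M) : s * (∑ i ∈ t, f i).natDegree ≤ M :=
  Finset.sum_induction f (fun p => s * p.natDegree ≤ M)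
    (fun _ _ => mul_natDegree_add_le_of_le) (by simp) h

theorem mul_natDegree_mul_le (s : ℕ) (p q : R[X]) :
    s * (p * q).natDegree ≤ s * p.natDegree + s * q.natDegree := by
  rw [← mul_add]
  exact Nat.mul_le_mul_left s natDegree_mul_le

/-- The coefficient of weight `M` when `X` has weight `s`. -/
noncomputable def weightCoeff (s M : ℕ) : R[X] →ₗ[R] R :=
  if s ∣ M then lcoeff R (M / s) else 0

theorem weightCoeff_eq_coeff (hs : 0 < s) (n : ℕ) (p : R[X]) :
    weightCoeff s (s * n) p = p.coeff n := by
  simp [weightCoeff, Nat.mul_div_cancel_left n hs]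

theorem weightCoeff_of_not_dvd (h : ¬ s ∣ M) (p : R[X]) : weightCoeff s M p = 0 := by
  simp [weightCoeff, h]

theorem weightCoeff_eq_zero_of_lt (h : s * p.natDegree < M) : weightCoeff s M p = 0 := by
  by_cases hM : s ∣ M
  · obtain ⟨m, rfl⟩ := hM
    rw [weightCoeff_eq_coeff (Nat.pos_of_ne_zero (by rintro rfl; simp at h))]
    exact coeff_eq_zero_of_natDegree_lt (lt_of_mul_lt_mul_left' h)
  · exact weightCoeff_of_not_dvd hM p

theorem weightCoeff_eq_leadingCoeff (hs : 0 < s) (h : s * p.natDegree = M) :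
    weightCoeff s M p = p.leadingCoeff := by
  rw [← h, weightCoeff_eq_coeff hs, leadingCoeff]

theorem weightCoeff_mul {M₁ M₂ : ℕ} (hs : 0 < s) (hp : s * p.natDegree ≤ M₁)
    (hq : s * q.natDegree ≤ M₂) :
    weightCoeff s (M₁ + M₂) (p * q) = weightCoeff s M₁ p * weightCoeff s M₂ q := by
  have hpq := mul_natDegree_mul_le s p q
  by_cases h₁ : s ∣ M₁
  · by_cases h₂ : s ∣ M₂
    · obtain ⟨m₁, rfl⟩ := h₁
      obtain ⟨m₂, rfl⟩ := h₂
      rw [← mul_add, weightCoeff_eq_coeff hs, weightCoeff_eq_coeff hs, weightCoeff_eq_coeff hs]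
      exact coeff_mul_add_eq_of_natDegree_le (le_of_mul_le_mul_left hp hs)
        (le_of_mul_le_mul_left hq hs)
    · have hq' : s * q.natDegree < M₂ := hq.lt_of_ne fun h => h₂ ⟨_, h.symm⟩
      rw [weightCoeff_eq_zero_of_lt (by omega), weightCoeff_of_not_dvd h₂, mul_zero]
  · have hp' : s * p.natDegree < M₁ := hp.lt_of_ne fun h => h₁ ⟨_, h.symm⟩
    rw [weightCoeff_eq_zero_of_lt (by omega), weightCoeff_of_not_dvd h₁, zero_mul]

end WeightCoeff

section Equiv

variable {R B : Type*} [CommRing R] [CommRing B]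

variable [IsDomain B] (e : R[X] ≃+* B[X]) (hC : ∀ a, (e (C a)).natDegree = 0)
include hC

theorem natDegree_apply_eq_natDegree_mul (p : R[X]) :
    (e p).natDegree = p.natDegree * (e X).natDegree := by
  let ρ : R →+* B := (constantCoeff.comp e.toRingHom).comp C
  have heC : ∀ a, e (C a) = C (ρ a) := fun a => eq_C_of_natDegree_eq_zero (hC a)
  have hρ : Function.Injective ρ := fun a b hab =>
    C_injective (e.injective (by rw [heC, heC, hab]))
  have he : e.toRingHom = eval₂RingHom (C.comp ρ) (e X) :=
    ringHom_ext (fun a => by simp [heC]) (by simp)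
  have hp : e p = (p.map ρ).comp (e X) := by
    rw [comp, eval₂_map]
    exact RingHom.congr_fun he p
  rw [hp, natDegree_comp, natDegree_map_eq_of_injective hρ]

theorem exists_apply_C_eq_C (b : B) : ∃ a, e (C a) = C b := by
  have hdeg := natDegree_apply_eq_natDegree_mul e hC
  have hX : (e X).natDegree ≠ 0 := fun h => by
    simpa [h] using hdeg (e.symm X)
  have hb : (e.symm (C b)).natDegree = 0 := by
    simpa [hX] using (hdeg (e.symm (C b))).symm
  exact ⟨_, by rw [← eq_C_of_natDegree_eq_zero hb, e.apply_symm_apply]⟩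

end Equiv

end Polynomial

theorem exists_slope_bound {ι : Type*} (S : Finset ι) (d c w : ι → ℕ) (hw : ∀ i ∈ S, 0 < w i)
    (h : ∃ i ∈ S, c i ≤ d i) :
    ∃ r s : ℕ, 0 < s ∧ (∀ i ∈ S, s * d i ≤ s * c i + r * w i) ∧
      ∃ i ∈ S, s * d i = s * c i + r * w i := by
  obtain ⟨i₁, hi₁, hc₁⟩ := h
  obtain ⟨i₀, hi₀, hmax⟩ :=
    S.exists_max_image (fun i => ((d i : ℚ) - c i) / w i) ⟨i₁, hi₁⟩
  have hw₀ : (0 : ℚ) < w i₀ := by exact_mod_cast hw i₀ hi₀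
  have hc₀ : c i₀ ≤ d i₀ := by
    have h₁ : (0 : ℚ) ≤ ((d i₁ : ℚ) - c i₁) / w i₁ :=
      div_nonneg (sub_nonneg.2 (by exact_mod_cast hc₁)) (Nat.cast_nonneg _)
    have h₀ := (le_div_iff₀ hw₀).1 (h₁.trans (hmax i₁ hi₁))
    rw [zero_mul, sub_nonneg] at h₀
    exact_mod_cast h₀
  refine ⟨d i₀ - c i₀, w i₀, hw i₀ hi₀, fun i hi => ?_, i₀, hi₀, ?_⟩
  · have hwi : (0 : ℚ) < w i := by exact_mod_cast hw i hi
    have := hmax i hi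
    rw [div_le_div_iff₀ hwi hw₀] at this
    qify [hc₀]
    linarith
  · qify [hc₀]
    ring

namespace ExpMap

section HigherDeriv

variable {R : Type*} [CommRing R] [Algebra k R]

noncomputable def higherDeriv (φ : ExpMap k R) (j : ℕ) : R →ₗ[k] R :=
  (lcoeff R j).restrictScalars k ∘ₗ φ.toFun.toLinearMap

variable (φ : ExpMap k R)

theorem higherDeriv_apply (j : ℕ) (a : R) : φ.higherDeriv j a = (φ.toFun a).coeff j := rfl

@[simp]
theorem higherDeriv_zero (a : R) : φ.higherDeriv 0 a = a := by
  rw [higherDeriv_apply, coeff_zero_eq_eval_zero, φ.eval_zero]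

theorem higherDeriv_mul (j : ℕ) (a b : R) :
    φ.higherDeriv j (a * b) =
      ∑ ij ∈ antidiagonal j, φ.higherDeriv ij.1 a * φ.higherDeriv ij.2 b := by
  simp only [higherDeriv_apply, map_mul, coeff_mul]

theorem higherDeriv_higherDeriv (i l : ℕ) (a : R) :
    φ.higherDeriv l (φ.higherDeriv i a) = (l + i).choose i • φ.higherDeriv (l + i) a := by
  have h := congrArg (fun p => (p.coeff i).coeff l) (φ.coaction a)
  simp only [coeff_map, coeff_eval₂_X_add_C_X, hasseDeriv_coeff] at h
  simpa [higherDeriv_apply, nsmul_eq_mul] using h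

theorem higherDeriv_algebraMap {j : ℕ} (hj : 0 < j) (c : k) :
    φ.higherDeriv j (algebraMap k R c) = 0 := by
  rw [higherDeriv_apply, AlgHom.commutes, Polynomial.algebraMap_apply, coeff_C, if_neg hj.ne']

theorem higherDeriv_one {j : ℕ} (hj : 0 < j) : φ.higherDeriv j 1 = 0 := by
  simpa using φ.higherDeriv_algebraMap hj 1

theorem higherDeriv_eq_zero_of_natDegree_lt {j : ℕ} {a : R} (h : (φ.toFun a).natDegree < j) :
    φ.higherDeriv j a = 0 :=
  coeff_eq_zero_of_natDegree_lt h

theorem support_higherDeriv_finite (a : R) :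
    (Function.support fun j => φ.higherDeriv j a).Finite :=
  (Set.finite_Iic (φ.toFun a).natDegree).subset fun _ hj =>
    not_lt.1 fun h => hj (φ.higherDeriv_eq_zero_of_natDegree_lt h)

theorem apply_eq_C_iff (a : R) :
    φ.toFun a = C a ↔ ∀ j, 0 < j → φ.higherDeriv j a = 0 := by
  constructor
  · intro h j hj
    rw [higherDeriv_apply, h, coeff_C, if_neg hj.ne']
  · intro h
    ext j
    rcases Nat.eq_zero_or_pos j with rfl | hj
    · simpa [higherDeriv_apply] using φ.higherDeriv_zero a
    · rw [← higherDeriv_apply, h j hj, coeff_C, if_neg hj.ne']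

variable (D : ℕ → R →ₗ[k] R) (hfin : ∀ a, (Function.support fun j => D j a).Finite)
  (hzero : ∀ a, D 0 a = a) (hone : ∀ j, 0 < j → D j 1 = 0)
  (hmul : ∀ j a b, D j (a * b) = ∑ ij ∈ antidiagonal j, D ij.1 a * D ij.2 b)
  (hcomp : ∀ i l a, D l (D i a) = (l + i).choose i • D (l + i) a)

noncomputable def ofHigherDeriv : ExpMap k R where
  toFun :=
    { toFun := fun a => ofSupportFinite (fun j => D j a) (hfin a)
      map_one' := by
        ext j
        rcases Nat.eq_zero_or_pos j with rfl | hj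
        · simp [hzero]
        · simp [hone j hj, coeff_one, hj.ne']
      map_mul' := fun a b => by
        ext j
        simp only [coeff_ofSupportFinite, hmul, coeff_mul]
      map_zero' := by
        ext j
        simp
      map_add' := fun a b => by
        ext j
        simp
      commutes' := fun c => by
        ext j
        rcases Nat.eq_zero_or_pos j with rfl | hj
        · simp [hzero, Polynomial.algebraMap_apply]
        · simp [Algebra.algebraMap_eq_smul_one, hone j hj, coeff_one, hj.ne'] }
  eval_zero a := by
    rw [← coeff_zero_eq_eval_zero]
    exact hzero a
  coaction a := by
    ext i l
    simp [coeff_eval₂_X_add_C_X, hasseDeriv_coeff, hcomp, nsmul_eq_mul]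

end HigherDeriv

variable {B : Type*} [CommRing B] [Algebra k B]

/-- The translation `X ↦ X + U` of `B[X]`, pulled back to `A[X]` along `e`. -/
noncomputable def pullbackTranslation (e : A[X] ≃ₐ[k] B[X]) : ExpMap k A[X] :=
  ofHigherDeriv (fun j => e.symm.toLinearMap ∘ₗ (hasseDeriv j).restrictScalars k ∘ₗ e.toLinearMap)
    (fun p => (Set.finite_Iic (e p).natDegree).subset fun j hj =>
      Set.mem_Iic.2 (not_lt.1 fun h => hj (by simp [hasseDeriv_eq_zero_of_lt_natDegree _ _ h])))
    (fun p => by simp)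
    (fun j hj => by simp [hasseDeriv_apply_one j hj])
    (fun j p q => by simp [hasseDeriv_mul])
    (fun i l p => by
      simp [← LinearMap.comp_apply (hasseDeriv l), hasseDeriv_comp, Nat.choose_symm_add])

theorem higherDeriv_pullbackTranslation (e : A[X] ≃ₐ[k] B[X]) (j : ℕ) (p : A[X]) :
    (pullbackTranslation e).higherDeriv j p = e.symm (hasseDeriv j (e p)) :=
  rfl

section Weight

variable (φ : ExpMap k A[X]) (r s : ℕ)

structure WeightBound : Prop where
  pos : 0 < s
  le_C : ∀ (a : A) (j : ℕ), s * (φ.higherDeriv j (C a)).natDegree ≤ r * j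
  le_X : ∀ j : ℕ, s * (φ.higherDeriv j X).natDegree ≤ s + r * j

def weightBoundedSubalgebra : Subalgebra k A where
  carrier := {a | ∀ j, s * (φ.higherDeriv j (C a)).natDegree ≤ r * j}
  mul_mem' {a b} ha hb j := by
    rw [C_mul, higherDeriv_mul]
    refine mul_natDegree_sum_le_of_le _ _ fun ij hij => (mul_natDegree_mul_le s _ _).trans ?_
    rw [← mem_antidiagonal.1 hij, mul_add]
    exact add_le_add (ha _) (hb _)
  add_mem' {a b} ha hb j := by
    rw [C_add, map_add]
    exact mul_natDegree_add_le_of_le (ha j) (hb j)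
  algebraMap_mem' c j := by
    rcases Nat.eq_zero_or_pos j with rfl | hj
    · simp
    · rw [← Polynomial.algebraMap_apply, higherDeriv_algebraMap _ hj]
      simp

noncomputable def topCoeff (j n : ℕ) : A →ₗ[k] A :=
  (weightCoeff s (s * n + r * j)).restrictScalars k ∘ₗ φ.higherDeriv j ∘ₗ
    (monomial n).restrictScalars k

theorem topCoeff_apply (j n : ℕ) (u : A) :
    φ.topCoeff r s j n u = weightCoeff s (s * n + r * j) (φ.higherDeriv j (monomial n u)) :=
  rfl

theorem support_topCoeff_finite (n : ℕ) (u : A) :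
    (Function.support fun j => φ.topCoeff r s j n u).Finite :=
  (φ.support_higherDeriv_finite (monomial n u)).subset fun j hj h =>
    hj (by simp only at h ⊢; rw [topCoeff_apply, h, map_zero])

noncomputable def gradedSeries (n : ℕ) (u : A) : A[X] :=
  ofSupportFinite (fun j => φ.topCoeff r s j n u) (φ.support_topCoeff_finite r s n u)

variable {φ r s}

namespace WeightBound

variable (hφ : φ.WeightBound r s)
include hφ

theorem le_monomial (j n : ℕ) (u : A) :
    s * (φ.higherDeriv j (monomial n u)).natDegree ≤ s * n + r * j := by
  induction n generalizing j with
  | zero => simpa using hφ.le_C u j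
  | succ n ih =>
    rw [← monomial_mul_X, higherDeriv_mul]
    refine mul_natDegree_sum_le_of_le _ _ fun ij hij => ?_
    calc _ ≤ _ := mul_natDegree_mul_le s _ _
      _ ≤ (s * n + r * ij.1) + (s + r * ij.2) := add_le_add (ih ij.1) (hφ.le_X ij.2)
      _ = s * (n + 1) + r * j := by rw [← mem_antidiagonal.1 hij]; ring

theorem topCoeff_zero (n : ℕ) (u : A) : φ.topCoeff r s 0 n u = u := by
  rw [topCoeff_apply, higherDeriv_zero, mul_zero, add_zero, weightCoeff_eq_coeff hφ.pos,
    coeff_monomial_same]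

theorem topCoeff_mul (j n₁ n₂ : ℕ) (u v : A) :
    φ.topCoeff r s j (n₁ + n₂) (u * v) =
      ∑ ij ∈ antidiagonal j, φ.topCoeff r s ij.1 n₁ u * φ.topCoeff r s ij.2 n₂ v := by
  rw [topCoeff_apply, ← monomial_mul_monomial, higherDeriv_mul, map_sum]
  refine Finset.sum_congr rfl fun ij hij => ?_
  rw [show s * (n₁ + n₂) + r * j = (s * n₁ + r * ij.1) + (s * n₂ + r * ij.2) by
    rw [← mem_antidiagonal.1 hij]; ring]
  exact weightCoeff_mul hφ.pos (hφ.le_monomial _ _ _) (hφ.le_monomial _ _ _)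

theorem gradedSeries_mul (n₁ n₂ : ℕ) (u v : A) :
    φ.gradedSeries r s (n₁ + n₂) (u * v) = φ.gradedSeries r s n₁ u * φ.gradedSeries r s n₂ v := by
  ext j
  simp only [gradedSeries, coeff_ofSupportFinite, coeff_mul, hφ.topCoeff_mul]

theorem gradedSeries_eq_mul_pow (n : ℕ) (u : A) :
    φ.gradedSeries r s n u = φ.gradedSeries r s 0 u * φ.gradedSeries r s 1 1 ^ n := by
  induction n with
  | zero => rw [pow_zero, mul_one]
  | succ n ih => rw [← mul_one u, hφ.gradedSeries_mul, ih, mul_one, pow_succ, mul_assoc]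

theorem weightCoeff_higherDeriv {M : ℕ} {q : A[X]} (hq : s * q.natDegree ≤ M) (l : ℕ) :
    weightCoeff s (M + r * l) (φ.higherDeriv l q) =
      φ.topCoeff r s l (M / s) (weightCoeff s M q) := by
  have hlow : ∀ m, s * m < M → ∀ u : A,
      weightCoeff s (M + r * l) (φ.higherDeriv l (monomial m u)) = 0 := fun m hm u =>
    weightCoeff_eq_zero_of_lt ((hφ.le_monomial l m u).trans_lt (by omega))
  have hm_le : ∀ m ∈ Finset.range (q.natDegree + 1), s * m ≤ M := fun m hm =>
    (Nat.mul_le_mul_left s (Nat.lt_succ_iff.1 (Finset.mem_range.1 hm))).trans hq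
  rw [as_sum_range' q (q.natDegree + 1) (Nat.lt_succ_self _), map_sum, map_sum]
  by_cases hM : s ∣ M
  · obtain ⟨m₀, rfl⟩ := hM
    rw [Nat.mul_div_cancel_left m₀ hφ.pos, ← as_sum_range' q (q.natDegree + 1) (Nat.lt_succ_self _),
      weightCoeff_eq_coeff hφ.pos]
    refine Finset.sum_eq_single m₀ (fun m hm hne => hlow m ?_ _) fun h => ?_
    · exact (hm_le m hm).lt_of_ne fun h => hne (Nat.eq_of_mul_eq_mul_left hφ.pos h)
    · rw [coeff_eq_zero_of_natDegree_lt (by simpa using h), monomial_zero_right, map_zero,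
        map_zero]
  · rw [← as_sum_range' q (q.natDegree + 1) (Nat.lt_succ_self _), weightCoeff_of_not_dvd hM,
      map_zero]
    exact Finset.sum_eq_zero fun m hm =>
      hlow m ((hm_le m hm).lt_of_ne fun h => hM ⟨m, h.symm⟩) _

section Domain

variable [IsDomain A]

theorem gradedSeries_one_X : φ.gradedSeries r s 1 1 = 1 := by
  set g := φ.gradedSeries r s 1 1
  have hg₀ : g.coeff 0 = 1 := hφ.topCoeff_zero 1 1
  suffices hJ : g.natDegree = 0 by rw [eq_C_of_natDegree_eq_zero hJ, hg₀, C_1]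
  by_contra hJ
  set J := g.natDegree
  have hg : g ≠ 0 := fun h => by simp [h] at hg₀
  set b := g.leadingCoeff
  have hb : b ≠ 0 := leadingCoeff_ne_zero.2 hg
  obtain ⟨m, hm⟩ : s ∣ s * 1 + r * J := by
    by_contra h
    exact hb (weightCoeff_of_not_dvd h _)
  -- `b X^m` is the top term of `D J X`; by maximality of `J` it is a graded invariant.
  have hinv : φ.gradedSeries r s m b = C b := by
    ext i
    rcases Nat.eq_zero_or_pos i with rfl | hi
    · simp [gradedSeries, hφ.topCoeff_zero]
    have key := hφ.weightCoeff_higherDeriv (hφ.le_monomial J 1 1) i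
    rw [higherDeriv_higherDeriv, map_nsmul, show s * 1 + r * J + r * i = s * 1 + r * (i + J) by ring]
      at key
    change (i + J).choose J • g.coeff (i + J) = φ.topCoeff r s i _ b at key
    rw [coeff_eq_zero_of_natDegree_lt (by omega), smul_zero, hm, Nat.mul_div_cancel_left m hφ.pos]
      at key
    rw [coeff_C, if_neg hi.ne']
    exact key.symm
  have hm₁ : 0 < m := Nat.pos_of_ne_zero fun h => by have := hφ.pos; simp [h] at hm; omega
  have hdeg := congrArg natDegree (hφ.gradedSeries_eq_mul_pow m b)
  have hb₀ : φ.gradedSeries r s 0 b ≠ 0 := fun h => hb (by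
    simpa [gradedSeries, hφ.topCoeff_zero] using congrArg (coeff · 0) h)
  rw [hinv, natDegree_C, natDegree_mul hb₀ (pow_ne_zero m hg), natDegree_pow] at hdeg
  have : 0 < m * g.natDegree := Nat.mul_pos hm₁ (Nat.pos_of_ne_zero hJ)
  omega

theorem topCoeff_eq_topCoeff_zero (j n : ℕ) (u : A) :
    φ.topCoeff r s j n u = φ.topCoeff r s j 0 u := by
  have h := hφ.gradedSeries_eq_mul_pow n u
  rw [hφ.gradedSeries_one_X, one_pow, mul_one] at h
  exact congrArg (coeff · j) h

theorem topCoeff_topCoeff (i l : ℕ) (a : A) :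
    φ.topCoeff r s l 0 (φ.topCoeff r s i 0 a) = (l + i).choose i • φ.topCoeff r s (l + i) 0 a := by
  have key := hφ.weightCoeff_higherDeriv (hφ.le_monomial i 0 a) l
  rw [higherDeriv_higherDeriv, map_nsmul, show s * 0 + r * i + r * l = s * 0 + r * (l + i) by ring]
    at key
  rw [← hφ.topCoeff_eq_topCoeff_zero l ((s * 0 + r * i) / s)]
  exact key.symm

noncomputable def gradedExpMap : ExpMap k A :=
  ofHigherDeriv (fun j => φ.topCoeff r s j 0) (φ.support_topCoeff_finite r s 0) (hφ.topCoeff_zero 0)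
    (fun j hj => by rw [topCoeff_apply, monomial_zero_one, higherDeriv_one _ hj, map_zero])
    (fun j a b => hφ.topCoeff_mul j 0 0 a b) hφ.topCoeff_topCoeff

theorem topCoeff_eq_zero_of_rigid (hrigid : ∀ ψ : ExpMap k A, ∀ a : A, ψ.toFun a = C a)
    {j : ℕ} (hj : 0 < j) (n : ℕ) (u : A) : φ.topCoeff r s j n u = 0 := by
  rw [hφ.topCoeff_eq_topCoeff_zero]
  exact (hφ.gradedExpMap.apply_eq_C_iff u).1 (hrigid _ u) j hj

end Domain

end WeightBound

variable (φ)

theorem WeightBound.of_adjoin_eq_top {T : Set A} (hT : Algebra.adjoin k T = ⊤) {r s : ℕ}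
    (hs : 0 < s) (hC : ∀ t ∈ T, ∀ j, s * (φ.higherDeriv j (C t)).natDegree ≤ r * j)
    (hX : ∀ j, s * (φ.higherDeriv j X).natDegree ≤ s + r * j) : φ.WeightBound r s :=
  ⟨hs, fun _ => (Algebra.adjoin_le hC : _ ≤ φ.weightBoundedSubalgebra r s) (hT ▸ Algebra.mem_top),
    hX⟩

theorem exists_weightBound_attained {T : Finset A} (hT : Algebra.adjoin k (T : Set A) = ⊤)
    {t : A} (ht : t ∈ T) {j₁ : ℕ} (hj₁ : 0 < j₁) (hD : φ.higherDeriv j₁ (C t) ≠ 0) :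
    ∃ r s, φ.WeightBound r s ∧ ∃ n u j, 0 < j ∧ φ.higherDeriv j (monomial n u) ≠ 0 ∧
      s * (φ.higherDeriv j (monomial n u)).natDegree = s * n + r * j := by
  classical
  set P : Finset (ℕ × A) := insert (1, 1) (T.image fun t => (0, t))
  have hTP : ∀ t ∈ T, ((0, t) : ℕ × A) ∈ P := fun t ht =>
    Finset.mem_insert_of_mem (Finset.mem_image_of_mem _ ht)
  obtain ⟨N, hN⟩ : ∃ N, ∀ p ∈ P, (φ.toFun (monomial p.1 p.2)).natDegree ≤ N :=
    ⟨P.sup fun p => (φ.toFun (monomial p.1 p.2)).natDegree, fun p hp =>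
      Finset.le_sup (f := fun p : ℕ × A => (φ.toFun (monomial p.1 p.2)).natDegree) (b := p) hp⟩
  set S := (P ×ˢ Finset.Icc 1 N).filter fun x => φ.higherDeriv x.2 (monomial x.1.1 x.1.2) ≠ 0
  have hS : ∀ p ∈ P, ∀ j, 0 < j → φ.higherDeriv j (monomial p.1 p.2) ≠ 0 → (p, j) ∈ S := by
    intro p hp j hj hne
    refine Finset.mem_filter.2 ⟨Finset.mem_product.2 ⟨hp, Finset.mem_Icc.2 ⟨hj, ?_⟩⟩, hne⟩
    by_contra hjN
    exact hne (φ.higherDeriv_eq_zero_of_natDegree_lt ((hN p hp).trans_lt (not_le.1 hjN)))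
  have hS_pos : ∀ x ∈ S, 0 < x.2 := fun x hx =>
    (Finset.mem_Icc.1 (Finset.mem_product.1 (Finset.mem_filter.1 hx).1).2).1
  obtain ⟨r, s, hs, hle, x, hxS, hx⟩ := exists_slope_bound S
    (fun x => (φ.higherDeriv x.2 (monomial x.1.1 x.1.2)).natDegree) (fun x => x.1.1) (fun x => x.2)
    hS_pos ⟨((0, t), j₁), hS _ (hTP t ht) j₁ hj₁ (by simpa using hD), Nat.zero_le _⟩
  have hP : ∀ p ∈ P, ∀ j,
      s * (φ.higherDeriv j (monomial p.1 p.2)).natDegree ≤ s * p.1 + r * j := by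
    intro p hp j
    rcases Nat.eq_zero_or_pos j with rfl | hj
    · simpa using Nat.mul_le_mul_left s (natDegree_monomial_le p.2)
    by_cases h0 : φ.higherDeriv j (monomial p.1 p.2) = 0
    · simp [h0]
    · exact hle (p, j) (hS p hp j hj h0)
  refine ⟨r, s, WeightBound.of_adjoin_eq_top φ hT hs (fun t ht j => ?_) fun j => ?_,
    x.1.1, x.1.2, x.2, hS_pos x hxS, (Finset.mem_filter.1 hxS).2, hx⟩
  · simpa using hP (0, t) (hTP t ht) j
  · simpa [monomial_one_one_eq_X] using hP (1, 1) (Finset.mem_insert_self _ _) j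

theorem apply_C_eq_C_of_rigid [IsDomain A] [Algebra.FiniteType k A]
    (hrigid : ∀ ψ : ExpMap k A, ∀ a : A, ψ.toFun a = C a) (a : A) :
    φ.toFun (C a) = C (C a) := by
  obtain ⟨T, hT⟩ := (Algebra.FiniteType.out : (⊤ : Subalgebra k A).FG)
  suffices hgen : (T : Set A) ⊆ φ.invariants.comap (IsScalarTower.toAlgHom k A A[X]) from
    Algebra.adjoin_le hgen (hT ▸ Algebra.mem_top : a ∈ Algebra.adjoin k (T : Set A))
  intro t ht
  by_contra hnt
  obtain ⟨j₁, hj₁, hD⟩ : ∃ j, 0 < j ∧ φ.higherDeriv j (C t) ≠ 0 := by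
    simpa [ExpMap.invariants, apply_eq_C_iff] using hnt
  obtain ⟨r, s, hφ, n, u, j, hj, hne, heq⟩ := φ.exists_weightBound_attained hT ht hj₁ hD
  have htop := hφ.topCoeff_eq_zero_of_rigid hrigid hj n u
  rw [topCoeff_apply, weightCoeff_eq_leadingCoeff hφ.pos heq] at htop
  exact hne (leadingCoeff_eq_zero.1 htop)

end Weight

end ExpMap

theorem natDegree_apply_C_of_rigid [IsDomain A] [Algebra.FiniteType k A]
    (hrigid : ∀ φ : ExpMap k A, ∀ a : A, φ.toFun a = C a) {B : Type*} [CommRing B] [Algebra k B]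
    (e : A[X] ≃ₐ[k] B[X]) (a : A) : (e (C a)).natDegree = 0 := by
  have hφ := (ExpMap.pullbackTranslation e).apply_C_eq_C_of_rigid hrigid a
  rw [ExpMap.apply_eq_C_iff] at hφ
  refine natDegree_eq_zero_of_hasseDeriv_eq_zero fun j hj => e.symm.injective ?_
  simpa [ExpMap.higherDeriv_pullbackTranslation] using hφ j hj

theorem rigid_cancellation_general [IsDomain A] [Algebra.FiniteType k A]
    (hrigid : ∀ φ : ExpMap k A, ∀ a : A, φ.toFun a = Polynomial.C a)
    (B : Type*) [CommRing B] [IsDomain B] [Algebra k B]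
    (e : Polynomial A ≃ₐ[k] Polynomial B) :
    (e.toAlgHom.comp (IsScalarTower.toAlgHom k A (Polynomial A))).range =
      (IsScalarTower.toAlgHom k B (Polynomial B)).range := by
  have hC := natDegree_apply_C_of_rigid hrigid e
  refine le_antisymm ?_ ?_
  · rintro _ ⟨a, rfl⟩
    exact ⟨_, (eq_C_of_natDegree_eq_zero (hC a)).symm⟩
  · rintro _ ⟨b, rfl⟩
    exact exists_apply_C_eq_C e.toRingEquiv hC b

/-- Let `A` be a rigid affine `k`-domain (`ML(A) = A`), and `B` a
`k`-domain with `A^{[1]} ≅_k B^{[1]}` (via `e`) and `trdeg_k B = trdeg_k A`.  If `A`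
(viewed inside `B^{[1]}` via `e`) is algebraically closed in `B^{[1]}`, then `A = B`
(the images of `A` and `B` in `B^{[1]}` coincide). -/
theorem rigid_cancellation [IsDomain A] [Algebra.FiniteType k A]
    (hrigid : ∀ φ : ExpMap k A, ∀ a : A, φ.toFun a = Polynomial.C a)
    (B : Type*) [CommRing B] [IsDomain B] [Algebra k B]
    (e : Polynomial A ≃ₐ[k] Polynomial B)
    (htr : ∃ (s : Set A) (u : Set B),
      IsTranscendenceBasis k ((↑) : s → A) ∧ IsTranscendenceBasis k ((↑) : u → B) ∧
      Nonempty (s ≃ u))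
    (hac : ∀ q : Polynomial B,
      IsAlgebraic (e.toAlgHom.comp (IsScalarTower.toAlgHom k A (Polynomial A))).range q →
        q ∈ (e.toAlgHom.comp (IsScalarTower.toAlgHom k A (Polynomial A))).range) :
    (e.toAlgHom.comp (IsScalarTower.toAlgHom k A (Polynomial A))).range =
      (IsScalarTower.toAlgHom k B (Polynomial B)).range :=
  rigid_cancellation_general hrigid B e
end
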